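/- arXiv:1307.3974 — 11 statements merged into one kernel-verified Lean document; each statement's English description precedes it below -/
import Mathlib

section
/- Let ε ∈ ℝ and let f̂ : ℝ → ℝ be a twice continuously differentiable nowhere-zero function satisfying 2·(f̂′/f̂)′(u) = −ε·f̂(u)² for all u ∈ ℝ. Then for every m > 0 the functions F(x,y) = (m·√(1+m²)/√2)·f̂(m²x + y) and K(x,y) = (√(1+m²)/√2)·f̂(m²x + y) satisfy all three equations (E1), (E2), (E3) of the system (S_ε) on ℝ², and the same holds with K replaced by −K. -/
noncomputable section

/-- Partial derivative with respect to the first coordinate. -/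
def pdx (f : ℝ × ℝ → ℝ) (p : ℝ × ℝ) : ℝ := deriv (fun t => f (t, p.2)) p.1

/-- Partial derivative with respect to the second coordinate. -/
def pdy (f : ℝ × ℝ → ℝ) (p : ℝ × ℝ) : ℝ := deriv (fun t => f (p.1, t)) p.2

/-- Equation (E1):  ∂ₓ(k/f) + ∂_y(f/k) = 0  at the point `p`. -/
def E1 (f k : ℝ × ℝ → ℝ) (p : ℝ × ℝ) : Prop :=
  pdx (fun q => k q / f q) p + pdy (fun q => f q / k q) p = 0

/-- Equation (E2):  (∂_y f)/k = (∂ₓ k)/f  at the point `p`. -/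
def E2 (f k : ℝ × ℝ → ℝ) (p : ℝ × ℝ) : Prop :=
  pdy f p / k p = pdx k p / f p

/-- Equation (E3):  ∂_y((∂_y f)/k) + ∂ₓ((∂ₓ k)/f) = −ε·f·k  at the point `p`. -/
def E3 (ε : ℝ) (f k : ℝ × ℝ → ℝ) (p : ℝ × ℝ) : Prop :=
  pdy (fun q => pdy f q / k q) p + pdx (fun q => pdx k q / f q) p = -ε * f p * k p

/-!
For travelling waves `F = a · g (c x + y)`, `K = b · g (c x + y)` the quotient `K / F` is constant,
which gives (E1), while `∂_y F / K` and `∂ₓ K / F` are the travelling waves `(a / b) L` and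
`(b c / a) L` of the logarithmic derivative `L = g' / g`. So (E2) holds once `r := a / b = b c / a`,
and then (E3) reads `r (1 + c) L' = -ε a b g²`, which the ODE `2 L' = -ε g²` supplies once
`r (1 + c) = 2 a b`. With `c = m²`, `a = m b` and `2 b² = 1 + m²` both relations hold, with
`r = m`; replacing `(m, b)` by `(-m, -b)` handles `-K`.
-/

def travelingWave (a c : ℝ) (g : ℝ → ℝ) : ℝ × ℝ → ℝ := fun p => a * g (c * p.1 + p.2)

def SolvesSystem (ε : ℝ) (f k : ℝ × ℝ → ℝ) : Prop := ∀ p, E1 f k p ∧ E2 f k p ∧ E3 ε f k p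

section TravelingWave

variable {a b c : ℝ} {g : ℝ → ℝ}

lemma pdx_travelingWave (p : ℝ × ℝ) :
    pdx (travelingWave a c g) p = a * c * deriv g (c * p.1 + p.2) := by
  have hshift : deriv (fun t => g (c * t + p.2)) p.1 = c * deriv g (c * p.1 + p.2) :=
    (deriv_comp_mul_left c (fun s => g (s + p.2)) p.1).trans
      (by rw [deriv_comp_add_const, smul_eq_mul])
  simp only [pdx, travelingWave, deriv_const_mul_field, hshift, mul_assoc]

lemma pdy_travelingWave (p : ℝ × ℝ) :
    pdy (travelingWave a c g) p = a * deriv g (c * p.1 + p.2) := by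
  simp only [pdy, travelingWave, deriv_const_mul_field, deriv_comp_const_add]

lemma pdy_div_travelingWave :
    (fun q => pdy (travelingWave a c g) q / travelingWave b c g q)
      = travelingWave (a / b) c (logDeriv g) := by
  ext q
  rw [pdy_travelingWave, travelingWave, travelingWave, mul_div_mul_comm, logDeriv_apply]

lemma pdx_div_travelingWave :
    (fun q => pdx (travelingWave b c g) q / travelingWave a c g q)
      = travelingWave (b * c / a) c (logDeriv g) := by
  ext q
  rw [pdx_travelingWave, travelingWave, travelingWave, mul_div_mul_comm, logDeriv_apply]

lemma E1_travelingWave (hg0 : ∀ u, g u ≠ 0) (p : ℝ × ℝ) :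
    E1 (travelingWave a c g) (travelingWave b c g) p := by
  have hratio (a' b' : ℝ) :
      (fun q => travelingWave a' c g q / travelingWave b' c g q) = fun _ => a' / b' := by
    ext q
    exact mul_div_mul_right _ _ (hg0 _)
  unfold E1
  rw [hratio, hratio]
  simp only [pdx, pdy, deriv_const, add_zero]

lemma E2_travelingWave (h : a / b = b * c / a) (p : ℝ × ℝ) :
    E2 (travelingWave a c g) (travelingWave b c g) p := by
  unfold E2
  rw [pdy_travelingWave, pdx_travelingWave]
  simp only [travelingWave]
  rw [mul_div_mul_comm, mul_div_mul_comm, h]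

lemma E3_travelingWave {ε : ℝ} (hode : ∀ u, 2 * deriv (logDeriv g) u = -ε * g u ^ 2)
    (h : a / b = b * c / a) (h' : a / b * (1 + c) = 2 * (a * b)) (p : ℝ × ℝ) :
    E3 ε (travelingWave a c g) (travelingWave b c g) p := by
  unfold E3
  rw [pdy_div_travelingWave, pdx_div_travelingWave, ← h, pdy_travelingWave, pdx_travelingWave]
  simp only [travelingWave]
  linear_combination a * b * hode (c * p.1 + p.2)
    + deriv (logDeriv g) (c * p.1 + p.2) * h'

theorem solvesSystem_travelingWave {ε m : ℝ} (hg0 : ∀ u, g u ≠ 0)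
    (hode : ∀ u, 2 * deriv (logDeriv g) u = -ε * g u ^ 2) (hm : m ≠ 0)
    (ha : a = m * b) (hb : 2 * b ^ 2 = 1 + m ^ 2) :
    SolvesSystem ε (travelingWave a (m ^ 2) g) (travelingWave b (m ^ 2) g) := by
  have hb0 : b ≠ 0 := by rintro rfl; nlinarith
  have hslope : a / b = m := by rw [ha]; field_simp
  have h : a / b = b * m ^ 2 / a := by rw [hslope, ha]; field_simp
  have h' : a / b * (1 + m ^ 2) = 2 * (a * b) := by rw [hslope, ha]; linear_combination -m * hb
  exact fun p => ⟨E1_travelingWave hg0 p, E2_travelingWave h p, E3_travelingWave hode h h' p⟩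

end TravelingWave

theorem stmt_3_general (ε : ℝ) (g : ℝ → ℝ) (hg0 : ∀ u, g u ≠ 0)
    (hode : ∀ u, 2 * deriv (fun v => deriv g v / g v) u = -ε * (g u) ^ 2)
    (m : ℝ) (hm : 0 < m) :
    let F : ℝ × ℝ → ℝ :=
      fun p => (m * Real.sqrt (1 + m ^ 2) / Real.sqrt 2) * g (m ^ 2 * p.1 + p.2)
    let K : ℝ × ℝ → ℝ :=
      fun p => (Real.sqrt (1 + m ^ 2) / Real.sqrt 2) * g (m ^ 2 * p.1 + p.2)
    (∀ p, E1 F K p ∧ E2 F K p ∧ E3 ε F K p) ∧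
      (∀ p, E1 F (fun q => -K q) p ∧ E2 F (fun q => -K q) p ∧ E3 ε F (fun q => -K q) p) := by
  intro F K
  have hb : 2 * (Real.sqrt (1 + m ^ 2) / Real.sqrt 2) ^ 2 = 1 + m ^ 2 := by
    rw [div_pow, Real.sq_sqrt (by positivity), Real.sq_sqrt zero_le_two]; field_simp
  have hnegK :
      (fun q => -K q) = travelingWave (-(Real.sqrt (1 + m ^ 2) / Real.sqrt 2)) (m ^ 2) g := by
    ext q; exact (neg_mul _ _).symm
  refine ⟨solvesSystem_travelingWave hg0 hode hm.ne' (mul_div_assoc _ _ _) hb, ?_⟩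
  have hneg := solvesSystem_travelingWave (a := m * Real.sqrt (1 + m ^ 2) / Real.sqrt 2)
    (b := -(Real.sqrt (1 + m ^ 2) / Real.sqrt 2)) (m := -m) hg0 hode (neg_ne_zero.mpr hm.ne')
    (by rw [mul_div_assoc]; ring) (by rwa [neg_sq, neg_sq])
  rwa [neg_sq, ← hnegK] at hneg

/-- If a C² nowhere-zero `g : ℝ → ℝ` satisfies `2·(g′/g)′ = −ε·g²`, then for
every `m > 0` the pair `F(x,y) = (m√(1+m²)/√2)·g(m²x+y)`, `K(x,y) = (√(1+m²)/√2)·g(m²x+y)`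
satisfies (E1), (E2), (E3) of the system (S_ε) on ℝ², and likewise with `K` replaced by `−K`. -/
theorem stmt_3 (ε : ℝ) (g : ℝ → ℝ) (hg : ContDiff ℝ 2 g) (hg0 : ∀ u, g u ≠ 0)
    (hode : ∀ u, 2 * deriv (fun v => deriv g v / g v) u = -ε * (g u) ^ 2)
    (m : ℝ) (hm : 0 < m) :
    let F : ℝ × ℝ → ℝ :=
      fun p => (m * Real.sqrt (1 + m ^ 2) / Real.sqrt 2) * g (m ^ 2 * p.1 + p.2)
    let K : ℝ × ℝ → ℝ :=
      fun p => (Real.sqrt (1 + m ^ 2) / Real.sqrt 2) * g (m ^ 2 * p.1 + p.2)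
    (∀ p, E1 F K p ∧ E2 F K p ∧ E3 ε F K p) ∧
      (∀ p, E1 F (fun q => -K q) p ∧ E2 F (fun q => -K q) p ∧ E3 ε F (fun q => -K q) p) :=
  stmt_3_general ε g hg0 hode m hm
end
end

section
/- For all real numbers c > 0 and m > 0, the functions f(x,y) = c·m·sech(c(m²x+y)/√(1+m²)) and k(x,y) = c·sech(c(m²x+y)/√(1+m²)) are positive on ℝ² and satisfy all three equations (E1), (E2), (E3) of the system (S_ε) with ε = 1 on ℝ². -/
noncomputable section

/-!
Both `f` and `k` are multiples `α sech φ`, `β sech φ` of the hyperbolic secant of one linear phase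
`φ = a x + b y`. Hence `k / f` is constant, which gives (E1), while `(∂_y f) / k` and `(∂ₓ k) / f`
are the multiples `-(α b / β) tanh φ` and `-(β a / α) tanh φ` of `tanh φ`. So (E2) reduces to
`α² b = β² a` and, since `tanh' = sech²`, (E3) to `α² b² + β² a² = ε α² β²`. Both identities hold for
`α = c m`, `β = c`, `a = c m² / √(1 + m²)`, `b = c / √(1 + m²)`.
-/

open Real

theorem Real.hasDerivAt_tanh (x : ℝ) : HasDerivAt tanh (1 / cosh x ^ 2) x := by
  have h := (hasDerivAt_sinh x).div (hasDerivAt_cosh x) (cosh_pos x).ne'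
  rw [show tanh = fun x => sinh x / cosh x from funext tanh_eq_sinh_div_cosh]
  refine h.congr_deriv ?_
  rw [← cosh_sq_sub_sinh_sq x]
  ring

theorem hasDerivAt_div_cosh_affine (A a d t : ℝ) :
    HasDerivAt (fun t => A / cosh (a * t + d))
      (-(A * a) * tanh (a * t + d) / cosh (a * t + d)) t := by
  have hφ : HasDerivAt (fun t => a * t + d) a t := by
    simpa using ((hasDerivAt_id t).const_mul a).add_const d
  refine ((hasDerivAt_const t A).div ((hasDerivAt_cosh _).comp t hφ)
    (cosh_pos _).ne').congr_deriv ?_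
  have := (cosh_pos (a * t + d)).ne'
  simp only [Function.comp_apply, tanh_eq_sinh_div_cosh]
  field_simp
  ring

theorem hasDerivAt_mul_tanh_affine (B a d t : ℝ) :
    HasDerivAt (fun t => B * tanh (a * t + d)) (B * a / cosh (a * t + d) ^ 2) t := by
  have hφ : HasDerivAt (fun t => a * t + d) a t := by
    simpa using ((hasDerivAt_id t).const_mul a).add_const d
  refine (((Real.hasDerivAt_tanh _).comp t hφ).const_mul B).congr_deriv ?_
  ring

def sechWave (A a b : ℝ) (p : ℝ × ℝ) : ℝ := A / cosh (a * p.1 + b * p.2)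

def tanhWave (B a b : ℝ) (p : ℝ × ℝ) : ℝ := B * tanh (a * p.1 + b * p.2)

section Waves

variable (a b : ℝ)

theorem pdx_sechWave (A : ℝ) (p : ℝ × ℝ) :
    pdx (sechWave A a b) p =
      -(A * a) * tanh (a * p.1 + b * p.2) / cosh (a * p.1 + b * p.2) :=
  (hasDerivAt_div_cosh_affine A a (b * p.2) p.1).deriv

theorem pdy_sechWave (A : ℝ) (p : ℝ × ℝ) :
    pdy (sechWave A a b) p =
      -(A * b) * tanh (a * p.1 + b * p.2) / cosh (a * p.1 + b * p.2) := by
  simp only [pdy, sechWave, add_comm (a * p.1)]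
  exact (hasDerivAt_div_cosh_affine A b (a * p.1) p.2).deriv

theorem pdx_tanhWave (B : ℝ) (p : ℝ × ℝ) :
    pdx (tanhWave B a b) p = B * a / cosh (a * p.1 + b * p.2) ^ 2 :=
  (hasDerivAt_mul_tanh_affine B a (b * p.2) p.1).deriv

theorem pdy_tanhWave (B : ℝ) (p : ℝ × ℝ) :
    pdy (tanhWave B a b) p = B * b / cosh (a * p.1 + b * p.2) ^ 2 := by
  simp only [pdy, tanhWave, add_comm (a * p.1)]
  exact (hasDerivAt_mul_tanh_affine B b (a * p.1) p.2).deriv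

theorem sechWave_div_sechWave (A B : ℝ) (p : ℝ × ℝ) :
    sechWave A a b p / sechWave B a b p = A / B :=
  div_div_div_cancel_right₀ (cosh_pos _).ne' A B

theorem pdx_sechWave_div_sechWave (A B : ℝ) (hB : B ≠ 0) :
    (fun q => pdx (sechWave A a b) q / sechWave B a b q) = tanhWave (-(A * a / B)) a b := by
  funext q
  have := (cosh_pos (a * q.1 + b * q.2)).ne'
  simp only [pdx_sechWave, sechWave, tanhWave]
  field_simp

theorem pdy_sechWave_div_sechWave (A B : ℝ) (hB : B ≠ 0) :
    (fun q => pdy (sechWave A a b) q / sechWave B a b q) = tanhWave (-(A * b / B)) a b := by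
  funext q
  have := (cosh_pos (a * q.1 + b * q.2)).ne'
  simp only [pdy_sechWave, sechWave, tanhWave]
  field_simp

end Waves

theorem E1_of_div_eq_const {f k : ℝ × ℝ → ℝ} {r s : ℝ} (hkf : ∀ q, k q / f q = r)
    (hfk : ∀ q, f q / k q = s) (p : ℝ × ℝ) : E1 f k p := by
  simp only [E1, pdx, pdy, hkf, hfk, deriv_const, add_zero]

section SechWavePair

variable {α β : ℝ} (a b : ℝ)

theorem E2_sechWave (hα : α ≠ 0) (hβ : β ≠ 0) (h : α ^ 2 * b = β ^ 2 * a) (p : ℝ × ℝ) :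
    E2 (sechWave α a b) (sechWave β a b) p := by
  have hl := congrFun (pdy_sechWave_div_sechWave a b α β hβ) p
  have hr := congrFun (pdx_sechWave_div_sechWave a b β α hα) p
  rw [E2, hl, hr, tanhWave, tanhWave]
  congr 1
  field_simp
  linear_combination -h

theorem E3_sechWave {ε : ℝ} (hα : α ≠ 0) (hβ : β ≠ 0)
    (h : α ^ 2 * b ^ 2 + β ^ 2 * a ^ 2 = ε * α ^ 2 * β ^ 2)
    (p : ℝ × ℝ) : E3 ε (sechWave α a b) (sechWave β a b) p := by
  have := (cosh_pos (a * p.1 + b * p.2)).ne'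
  rw [E3, pdy_sechWave_div_sechWave a b α β hβ, pdx_sechWave_div_sechWave a b β α hα,
    pdy_tanhWave, pdx_tanhWave, sechWave, sechWave]
  field_simp
  linear_combination -h

end SechWavePair

/-- For `c, m > 0`, the functions `f(x,y) = c·m·sech(c(m²x+y)/√(1+m²))` and
`k(x,y) = c·sech(c(m²x+y)/√(1+m²))` are positive on ℝ² and satisfy (E1), (E2), (E3)
with ε = 1 on ℝ².  Here `sech t = 1/cosh t`. -/
theorem stmt_5 (c m : ℝ) (hc : 0 < c) (hm : 0 < m) :
    let f : ℝ × ℝ → ℝ :=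
      fun p => c * m * (1 / Real.cosh (c * (m ^ 2 * p.1 + p.2) / Real.sqrt (1 + m ^ 2)))
    let k : ℝ × ℝ → ℝ :=
      fun p => c * (1 / Real.cosh (c * (m ^ 2 * p.1 + p.2) / Real.sqrt (1 + m ^ 2)))
    (∀ p, 0 < f p) ∧ (∀ p, 0 < k p) ∧ ∀ p, E1 f k p ∧ E2 f k p ∧ E3 1 f k p := by
  intro f k
  set s := √(1 + m ^ 2)
  have hs : s ^ 2 = 1 + m ^ 2 := sq_sqrt (by positivity)
  have hs0 : s ≠ 0 := (sqrt_pos.mpr (by positivity)).ne'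
  have hwave : ∀ A, (fun p : ℝ × ℝ => A * (1 / cosh (c * (m ^ 2 * p.1 + p.2) / s))) =
      sechWave A (c * m ^ 2 / s) (c / s) := by
    intro A
    funext p
    rw [sechWave, mul_one_div]
    congr 2
    ring
  have hf : f = sechWave (c * m) (c * m ^ 2 / s) (c / s) := hwave (c * m)
  have hk : k = sechWave c (c * m ^ 2 / s) (c / s) := hwave c
  have hα : c * m ≠ 0 := by positivity
  rw [hf, hk]
  refine ⟨fun p => div_pos (by positivity) (cosh_pos _), fun p => div_pos hc (cosh_pos _),
    fun p => ⟨E1_of_div_eq_const (sechWave_div_sechWave _ _ _ _) (sechWave_div_sechWave _ _ _ _) p,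
      E2_sechWave _ _ hα hc.ne' ?_ p, E3_sechWave _ _ hα hc.ne' ?_ p⟩⟩
  · field_simp
  · field_simp
    linear_combination -hs
end
end

section
/- Let f : ℝ → ℝ be a positive twice continuously differentiable function satisfying 2·(f′/f)′(u) + f(u)² = 0 for all u ∈ ℝ. Then there exist c₁ > 0 and u₀ ∈ ℝ such that f(u) = c₁·sech(c₁·(u − u₀)/√2) for all u ∈ ℝ. -/
/-! With `h = f′/f` the equation reads `h′ = -f²/2`, so `h² + f²/2` is a first integral, say
`a²`, and then `h′ = h² - a²`. Hence `(± a - h)/f` solves `g′ = ± a g`: the functions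
`(a - h)/f` and `(a + h)/f` are multiples of `exp (a u)` and `exp (-a u)`. Their sum is `2a/f`
and their product is `(a² - h²)/f² = 1/2`, which makes `1/f` a translate of `cosh (a u)/(√2 a)`. -/

open Real

theorem eq_mul_exp_of_hasDerivAt {g : ℝ → ℝ} {c : ℝ} (hg : ∀ u, HasDerivAt g (c * g u) u)
    (u : ℝ) : g u = g 0 * exp (c * u) := by
  have hconst : ∀ v, HasDerivAt (fun v => g v * exp (-(c * v))) 0 v := fun v => by
    have he : HasDerivAt (fun v => exp (-(c * v))) (exp (-(c * v)) * -c) v := by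
      simpa using ((hasDerivAt_id v).const_mul c).fun_neg.exp
    exact ((hg v).fun_mul he).congr_deriv (by ring)
  have := is_const_of_deriv_eq_zero (fun v => (hconst v).differentiableAt)
    (fun v => (hconst v).deriv) u 0
  simp only [mul_zero, neg_zero, exp_zero, mul_one] at this
  rw [← this, mul_assoc, ← exp_add, neg_add_cancel, exp_zero, mul_one]

theorem exists_mul_exp_add_mul_exp_eq_cosh {p q : ℝ} (hp : 0 < p) (hq : 0 < q) {a : ℝ}
    (ha : a ≠ 0) : ∃ u₀, ∀ u,
      p * exp (a * u) + q * exp (-(a * u)) = 2 * √(p * q) * cosh (a * (u - u₀)) := by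
  refine ⟨log (q / p) / (2 * a), fun u => ?_⟩
  set r := exp (log (q / p) / 2) with hr
  have hr0 : r ≠ 0 := (exp_pos _).ne'
  have hr2 : r ^ 2 * p = q := by
    rw [hr, ← exp_nat_mul, Nat.cast_ofNat, mul_div_cancel₀ _ two_ne_zero, exp_log (by positivity)]
    field_simp
  have hsqrt : √(p * q) = p * r := by
    rw [sqrt_eq_iff_mul_self_eq (by positivity) (by positivity), ← hr2]
    ring
  have harg : a * (u - log (q / p) / (2 * a)) = a * u - log (q / p) / 2 := by
    field_simp
  rw [hsqrt, harg, cosh_eq, neg_sub, exp_sub, exp_sub, ← hr, exp_neg]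
  field_simp
  linear_combination -hr2

section

variable {f : ℝ → ℝ}

theorem exists_logDeriv_sq_add_sq_div_two_eq_sq (hf : Differentiable ℝ f)
    (hlf : Differentiable ℝ (logDeriv f)) (hne : ∀ u, f u ≠ 0)
    (hode : ∀ u, 2 * deriv (logDeriv f) u + f u ^ 2 = 0) :
    ∃ a > 0, ∀ u, logDeriv f u ^ 2 + f u ^ 2 / 2 = a ^ 2 := by
  have hconst : ∀ v, HasDerivAt (fun v => logDeriv f v ^ 2 + f v ^ 2 / 2) 0 v := fun v => by
    have hdf : deriv f v = logDeriv f v * f v := (div_mul_cancel₀ _ (hne v)).symm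
    refine (((hlf v).hasDerivAt.fun_pow 2).fun_add
      (((hf v).hasDerivAt.fun_pow 2).div_const 2)).congr_deriv ?_
    rw [hdf]
    linear_combination logDeriv f v * hode v
  have hE0 : 0 < logDeriv f 0 ^ 2 + f 0 ^ 2 / 2 := by
    have := hne 0
    positivity
  refine ⟨_, sqrt_pos.2 hE0, fun u => ?_⟩
  rw [sq_sqrt hE0.le]
  exact is_const_of_deriv_eq_zero (fun v => (hconst v).differentiableAt)
    (fun v => (hconst v).deriv) u 0

theorem hasDerivAt_sub_logDeriv_div (hf : Differentiable ℝ f)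
    (hlf : Differentiable ℝ (logDeriv f)) (hne : ∀ u, f u ≠ 0)
    (hode : ∀ u, 2 * deriv (logDeriv f) u + f u ^ 2 = 0) {b : ℝ}
    (henergy : ∀ u, logDeriv f u ^ 2 + f u ^ 2 / 2 = b ^ 2) (u : ℝ) :
    HasDerivAt (fun v => (b - logDeriv f v) / f v) (b * ((b - logDeriv f u) / f u)) u := by
  have hdf : deriv f u = logDeriv f u * f u := (div_mul_cancel₀ _ (hne u)).symm
  refine (((hlf u).hasDerivAt.const_sub b).fun_div (hf u).hasDerivAt (hne u)).congr_deriv ?_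
  rw [hdf]
  field_simp
  linear_combination (henergy u - hode u / 2) / f u

theorem two_mul_div_eq_mul_exp_add_mul_exp (hf : Differentiable ℝ f)
    (hlf : Differentiable ℝ (logDeriv f)) (hne : ∀ u, f u ≠ 0)
    (hode : ∀ u, 2 * deriv (logDeriv f) u + f u ^ 2 = 0) {a : ℝ}
    (henergy : ∀ u, logDeriv f u ^ 2 + f u ^ 2 / 2 = a ^ 2) (u : ℝ) :
    2 * a / f u = (a - logDeriv f 0) / f 0 * exp (a * u)
      + (a + logDeriv f 0) / f 0 * exp (-(a * u)) := by
  have hP : (a - logDeriv f u) / f u = (a - logDeriv f 0) / f 0 * exp (a * u) :=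
    eq_mul_exp_of_hasDerivAt (hasDerivAt_sub_logDeriv_div hf hlf hne hode henergy) u
  have hQ : (-a - logDeriv f u) / f u = (-a - logDeriv f 0) / f 0 * exp (-(a * u)) := by
    rw [← neg_mul]
    exact eq_mul_exp_of_hasDerivAt
      (hasDerivAt_sub_logDeriv_div hf hlf hne hode (by simpa using henergy)) u
  linear_combination hP - hQ

end

/-- A positive C² function `f : ℝ → ℝ` with `2·(f′/f)′ + f² = 0` everywhere
is, up to translation, a sech profile: `f(u) = c₁·sech(c₁(u−u₀)/√2)` for some `c₁ > 0`,
`u₀ ∈ ℝ`.  Here `sech t = 1/cosh t`. -/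
theorem stmt_6 (f : ℝ → ℝ) (hf : ContDiff ℝ 2 f) (hfpos : ∀ u, 0 < f u)
    (hode : ∀ u, 2 * deriv (fun v => deriv f v / f v) u + (f u) ^ 2 = 0) :
    ∃ c₁ > (0 : ℝ), ∃ u₀ : ℝ, ∀ u,
      f u = c₁ * (1 / Real.cosh (c₁ * (u - u₀) / Real.sqrt 2)) := by
  have hf₁ : Differentiable ℝ f := hf.differentiable two_ne_zero
  have hne : ∀ u, f u ≠ 0 := fun u => (hfpos u).ne'
  have hlf : Differentiable ℝ (logDeriv f) := hf.differentiable_deriv_two.div hf₁ hne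
  obtain ⟨a, ha, henergy⟩ := exists_logDeriv_sq_add_sq_div_two_eq_sq hf₁ hlf hne hode
  obtain ⟨hlt, hgt⟩ : -a < logDeriv f 0 ∧ logDeriv f 0 < a :=
    abs_lt_of_sq_lt_sq' (by nlinarith [henergy 0, hfpos 0]) ha.le
  have hprod : (a - logDeriv f 0) / f 0 * ((a + logDeriv f 0) / f 0) = 1 / 2 := by
    field_simp [hne 0]
    linear_combination -2 * henergy 0
  have hsqrt : 2 * √(1 / 2 : ℝ) = √2 := by
    rw [sqrt_div' _ zero_le_two, sqrt_one]
    field_simp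
    exact (sq_sqrt zero_le_two).symm
  obtain ⟨u₀, hu₀⟩ := exists_mul_exp_add_mul_exp_eq_cosh (div_pos (sub_pos.2 hgt) (hfpos 0))
    (div_pos (neg_lt_iff_pos_add'.1 hlt) (hfpos 0)) ha.ne'
  refine ⟨√2 * a, by positivity, u₀, fun u => ?_⟩
  have hcosh : √2 * cosh (a * (u - u₀)) = 2 * a / f u := by
    rw [← hsqrt, ← hprod, ← hu₀ u, two_mul_div_eq_mul_exp_add_mul_exp hf₁ hlf hne hode henergy]
  rw [show √2 * a * (u - u₀) / √2 = a * (u - u₀) by field_simp]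
  have hc := cosh_pos (a * (u - u₀))
  field_simp [hne u] at hcosh ⊢
  refine mul_left_cancel₀ (sqrt_ne_zero'.2 two_pos) ?_
  linear_combination hcosh - a * sq_sqrt zero_le_two
end

section
/- For all real numbers c > 0 and m > 0, on the open set U = {(x,y) ∈ ℝ² : cos(c(m²x+y)/√(1+m²)) ≠ 0}, the functions f(x,y) = c·m·sec(c(m²x+y)/√(1+m²)) and k(x,y) = c·sec(c(m²x+y)/√(1+m²)) satisfy all three equations (E1), (E2), (E3) of the system (S_ε) with ε = −1. -/
noncomputable section

/-! Both `f` and `k` are multiples of `sec θ` for the linear phase `θ = β (m² x + y)`, `β = c / √(1 + m²)`.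
Hence `k / f` and `f / k` are locally constant, which gives (E1); `∂_y f / k` and `∂ₓ k / f` both equal
`m β tan θ`, which gives (E2); and differentiating `tan θ` once more turns (E3) into
`m β² (1 + m²) sec² θ = c² m sec² θ`, the choice of `β`. -/

open Real Filter Topology

section Partials

variable {f g : ℝ × ℝ → ℝ} {p : ℝ × ℝ}

lemma pdx_congr (h : f =ᶠ[𝓝 p] g) : pdx f p = pdx g p :=
  EventuallyEq.deriv_eq (((Continuous.prodMk_left p.2).tendsto p.1).eventually h)

lemma pdy_congr (h : f =ᶠ[𝓝 p] g) : pdy f p = pdy g p :=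
  EventuallyEq.deriv_eq (((Continuous.prodMk_right p.1).tendsto p.2).eventually h)

variable {α β : ℝ} {θ : ℝ × ℝ → ℝ}

lemma pdx_comp_linear {φ : ℝ → ℝ} {φ' : ℝ} (hθ : ∀ q, θ q = α * q.1 + β * q.2)
    (hφ : HasDerivAt φ φ' (θ p)) : pdx (fun q => φ (θ q)) p = α * φ' := by
  have hline : HasDerivAt (fun t => α * t + β * p.2) α p.1 := by
    simpa using ((hasDerivAt_id p.1).const_mul α).add_const (β * p.2)
  rw [hθ] at hφ
  simp only [pdx, hθ]
  exact (hφ.comp p.1 hline).deriv.trans (mul_comm _ _)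

lemma pdy_comp_linear {φ : ℝ → ℝ} {φ' : ℝ} (hθ : ∀ q, θ q = α * q.1 + β * q.2)
    (hφ : HasDerivAt φ φ' (θ p)) : pdy (fun q => φ (θ q)) p = β * φ' := by
  have hline : HasDerivAt (fun t => α * p.1 + β * t) β p.2 := by
    simpa using ((hasDerivAt_id p.2).const_mul β).const_add (α * p.1)
  rw [hθ] at hφ
  simp only [pdy, hθ]
  exact (hφ.comp p.2 hline).deriv.trans (mul_comm _ _)

end Partials

lemma hasDerivAt_const_div_cos (A : ℝ) {x : ℝ} (hx : cos x ≠ 0) :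
    HasDerivAt (fun t => A * (1 / cos t)) (tan x * (A * (1 / cos x))) x := by
  refine (((hasDerivAt_const x 1).div (hasDerivAt_cos x) hx).const_mul A).congr_deriv ?_
  rw [tan_eq_sin_div_cos]
  field_simp
  ring

def secWave (A : ℝ) (θ : ℝ × ℝ → ℝ) (q : ℝ × ℝ) : ℝ := A * (1 / cos (θ q))

section SecWave

variable {α β A B : ℝ} {θ : ℝ × ℝ → ℝ} {p : ℝ × ℝ}

lemma eventually_cos_ne_of_linear (hθ : ∀ q, θ q = α * q.1 + β * q.2) (hp : cos (θ p) ≠ 0) :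
    ∀ᶠ q in 𝓝 p, cos (θ q) ≠ 0 := by
  have hcont : Continuous θ := by
    rw [funext hθ]
    fun_prop
  exact (continuous_cos.comp hcont).continuousAt.eventually_ne hp

lemma secWave_div_secWave (hB : B ≠ 0) (hp : cos (θ p) ≠ 0) :
    secWave A θ p / secWave B θ p = A / B := by
  simp only [secWave]
  field_simp

lemma pdx_secWave_div_secWave (hθ : ∀ q, θ q = α * q.1 + β * q.2) (hB : B ≠ 0)
    (hp : cos (θ p) ≠ 0) : pdx (secWave A θ) p / secWave B θ p = α * A / B * tan (θ p) := by
  rw [show secWave A θ = fun q => A * (1 / cos (θ q)) from rfl,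
    pdx_comp_linear hθ (hasDerivAt_const_div_cos A hp)]
  simp only [secWave]
  field_simp

lemma pdy_secWave_div_secWave (hθ : ∀ q, θ q = α * q.1 + β * q.2) (hB : B ≠ 0)
    (hp : cos (θ p) ≠ 0) : pdy (secWave A θ) p / secWave B θ p = β * A / B * tan (θ p) := by
  rw [show secWave A θ = fun q => A * (1 / cos (θ q)) from rfl,
    pdy_comp_linear hθ (hasDerivAt_const_div_cos A hp)]
  simp only [secWave]
  field_simp

variable {c m : ℝ}

lemma E1_secWave (hθ : ∀ q, θ q = α * q.1 + β * q.2) (hc : c ≠ 0) (hm : m ≠ 0)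
    (hp : cos (θ p) ≠ 0) : E1 (secWave (c * m) θ) (secWave c θ) p := by
  have hnear := eventually_cos_ne_of_linear hθ hp
  have hkf : (fun q => secWave c θ q / secWave (c * m) θ q) =ᶠ[𝓝 p] fun _ => c / (c * m) :=
    hnear.mono fun q hq => secWave_div_secWave (mul_ne_zero hc hm) hq
  have hfk : (fun q => secWave (c * m) θ q / secWave c θ q) =ᶠ[𝓝 p] fun _ => c * m / c :=
    hnear.mono fun q hq => secWave_div_secWave hc hq
  rw [E1, pdx_congr hkf, pdy_congr hfk]
  simp [pdx, pdy]

lemma E2_secWave (hθ : ∀ q, θ q = m ^ 2 * β * q.1 + β * q.2) (hc : c ≠ 0) (hm : m ≠ 0)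
    (hp : cos (θ p) ≠ 0) : E2 (secWave (c * m) θ) (secWave c θ) p := by
  rw [E2, pdy_secWave_div_secWave hθ hc hp, pdx_secWave_div_secWave hθ (mul_ne_zero hc hm) hp]
  field_simp

lemma E3_secWave (hθ : ∀ q, θ q = m ^ 2 * β * q.1 + β * q.2) (hβ : β ^ 2 * (1 + m ^ 2) = c ^ 2)
    (hc : c ≠ 0) (hm : m ≠ 0) (hp : cos (θ p) ≠ 0) :
    E3 (-1) (secWave (c * m) θ) (secWave c θ) p := by
  have hnear := eventually_cos_ne_of_linear hθ hp
  have hy : (fun q => pdy (secWave (c * m) θ) q / secWave c θ q)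
      =ᶠ[𝓝 p] fun q => β * (c * m) / c * tan (θ q) :=
    hnear.mono fun q hq => pdy_secWave_div_secWave hθ hc hq
  have hx : (fun q => pdx (secWave c θ) q / secWave (c * m) θ q)
      =ᶠ[𝓝 p] fun q => m ^ 2 * β * c / (c * m) * tan (θ q) :=
    hnear.mono fun q hq => pdx_secWave_div_secWave hθ (mul_ne_zero hc hm) hq
  have htan (K : ℝ) : HasDerivAt (fun t => K * tan t) (K * (1 / cos (θ p) ^ 2)) (θ p) :=
    (hasDerivAt_tan hp).const_mul K
  rw [E3, pdy_congr hy, pdx_congr hx, pdy_comp_linear hθ (htan _), pdx_comp_linear hθ (htan _)]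
  simp only [secWave]
  field_simp
  linear_combination hβ

end SecWave

/-- For `c, m > 0`, on the open set where `cos(c(m²x+y)/√(1+m²)) ≠ 0`, the
functions `f = c·m·sec(c(m²x+y)/√(1+m²))` and `k = c·sec(c(m²x+y)/√(1+m²))` satisfy
(E1), (E2), (E3) with ε = −1.  Here `sec t = 1/cos t`. -/
theorem stmt_7 (c m : ℝ) (hc : 0 < c) (hm : 0 < m) :
    let f : ℝ × ℝ → ℝ :=
      fun p => c * m * (1 / Real.cos (c * (m ^ 2 * p.1 + p.2) / Real.sqrt (1 + m ^ 2)))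
    let k : ℝ × ℝ → ℝ :=
      fun p => c * (1 / Real.cos (c * (m ^ 2 * p.1 + p.2) / Real.sqrt (1 + m ^ 2)))
    ∀ p : ℝ × ℝ, Real.cos (c * (m ^ 2 * p.1 + p.2) / Real.sqrt (1 + m ^ 2)) ≠ 0 →
      E1 f k p ∧ E2 f k p ∧ E3 (-1) f k p := by
  intro f k p hp
  set β := c / √(1 + m ^ 2)
  have hθ (q : ℝ × ℝ) : c * (m ^ 2 * q.1 + q.2) / √(1 + m ^ 2) = m ^ 2 * β * q.1 + β * q.2 := by
    ring
  have hβ : β ^ 2 * (1 + m ^ 2) = c ^ 2 := by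
    rw [div_pow, sq_sqrt (by positivity)]
    field_simp
  exact ⟨E1_secWave hθ hc.ne' hm.ne' hp, E2_secWave hθ hc.ne' hm.ne' hp,
    E3_secWave hθ hβ hc.ne' hm.ne' hp⟩
end
end

section
/- For all real numbers c > 0 and m > 0, on the open set U = {(x,y) ∈ ℝ² : m²x + y ≠ 0}, the functions f(x,y) = c·m·csch(c(m²x+y)/√(1+m²)) and k(x,y) = c·csch(c(m²x+y)/√(1+m²)) satisfy all three equations (E1), (E2), (E3) of the system (S_ε) with ε = −1. -/
noncomputable section

/-! The functions are ridge functions `f = m • K ∘ ℓ`, `k = K ∘ ℓ` with `ℓ(x, y) = m²x + y`, so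
`∂ₓ` and `∂_y` act on them as `m² d/ds` and `d/ds` on the profile. Then `f / k` is constant, giving
(E1), and both `(∂_y f)/k` and `(∂ₓ k)/f` equal `m (log K)' ∘ ℓ`, giving (E2). Equation (E3) with
`ε = -1` becomes the Liouville equation `(1 + m²)(log K)'' = K²`, which
`K(s) = c csch(c s / √(1 + m²))` solves since `(log csch)'' = csch²`. -/

open Real Filter Topology

-- No differentiability is needed: where `φ` is not differentiable both sides are junk `0`.
theorem pdx_comp_linear_s8 (φ : ℝ → ℝ) (a : ℝ) (p : ℝ × ℝ) :
    pdx (fun q => φ (a * q.1 + q.2)) p = a * deriv φ (a * p.1 + p.2) := by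
  rw [pdx, deriv_comp_mul_left a (fun u => φ (u + p.2)), smul_eq_mul, deriv_comp_add_const]

theorem pdy_comp_linear_s8 (φ : ℝ → ℝ) (a : ℝ) (p : ℝ × ℝ) :
    pdy (fun q => φ (a * q.1 + q.2)) p = deriv φ (a * p.1 + p.2) :=
  deriv_comp_const_add φ (a * p.1) p.2

theorem logDeriv_comp_mul_left (φ : ℝ → ℝ) (b t : ℝ) :
    logDeriv (fun u => φ (b * u)) t = b * logDeriv φ (b * t) := by
  simp only [logDeriv_apply, deriv_comp_mul_left b φ t, smul_eq_mul, mul_div_assoc]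

theorem logDeriv_one_div_sinh {t : ℝ} (ht : t ≠ 0) :
    logDeriv (fun u => 1 / sinh u) t = -(cosh t / sinh t) := by
  have hs : sinh t ≠ 0 := sinh_ne_zero.mpr ht
  have hd : deriv (fun u => 1 / sinh u) t = -cosh t / sinh t ^ 2 := by
    have h : HasDerivAt (fun u => (sinh u)⁻¹) _ t := (hasDerivAt_sinh t).inv hs
    simpa only [one_div] using h.deriv
  rw [logDeriv_apply, hd]
  field_simp

theorem deriv_logDeriv_one_div_sinh {s : ℝ} (hs : s ≠ 0) :
    deriv (logDeriv fun u => 1 / sinh u) s = (1 / sinh s) ^ 2 := by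
  have hsinh : sinh s ≠ 0 := sinh_ne_zero.mpr hs
  have hloc : logDeriv (fun u => 1 / sinh u) =ᶠ[𝓝 s] fun t => -(cosh t / sinh t) :=
    (eventually_ne_nhds hs).mono fun t ht => logDeriv_one_div_sinh ht
  have h : HasDerivAt (fun t => -(cosh t / sinh t)) _ s :=
    ((hasDerivAt_cosh s).div (hasDerivAt_sinh s) hsinh).neg
  rw [hloc.deriv_eq, h.deriv]
  field_simp
  linear_combination cosh_sq_sub_sinh_sq s

theorem deriv_logDeriv_const_mul_one_div_sinh {b c s : ℝ} (hc : c ≠ 0) (hbs : b * s ≠ 0) :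
    deriv (logDeriv fun t => c * (1 / sinh (b * t))) s = b ^ 2 * (1 / sinh (b * s)) ^ 2 := by
  have h : (logDeriv fun t => c * (1 / sinh (b * t))) =
      fun t => b * logDeriv (fun u => 1 / sinh u) (b * t) := by
    funext t
    rw [logDeriv_const_mul t c hc, logDeriv_comp_mul_left (fun u => 1 / sinh u)]
  rw [h, deriv_const_mul_field, deriv_comp_mul_left, smul_eq_mul,
    deriv_logDeriv_one_div_sinh hbs]
  ring

section Ridge

variable {K : ℝ → ℝ} {p : ℝ × ℝ}

theorem E1_of_ridge {a μ : ℝ} (hK : ContinuousAt K (a * p.1 + p.2)) (hK0 : K (a * p.1 + p.2) ≠ 0) :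
    E1 (fun q => μ * K (a * q.1 + q.2)) (fun q => K (a * q.1 + q.2)) p := by
  have hev : ∀ᶠ s in 𝓝 (a * p.1 + p.2), K s ≠ 0 := hK.eventually_ne hK0
  have hkf : (fun s => K s / (μ * K s)) =ᶠ[𝓝 (a * p.1 + p.2)] fun _ => μ⁻¹ :=
    hev.mono fun s hs => div_mul_cancel_right₀ hs μ
  have hfk : (fun s => μ * K s / K s) =ᶠ[𝓝 (a * p.1 + p.2)] fun _ => μ :=
    hev.mono fun s hs => mul_div_cancel_right₀ μ hs
  rw [E1, pdx_comp_linear_s8 (fun s => K s / (μ * K s)), pdy_comp_linear_s8 (fun s => μ * K s / K s),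
    hkf.deriv_eq, hfk.deriv_eq, deriv_const, deriv_const, mul_zero, add_zero]

variable {m : ℝ}

theorem pdy_div_of_ridge (q : ℝ × ℝ) :
    pdy (fun q => m * K (m ^ 2 * q.1 + q.2)) q / K (m ^ 2 * q.1 + q.2) =
      m * logDeriv K (m ^ 2 * q.1 + q.2) := by
  rw [pdy_comp_linear_s8 (fun s => m * K s), deriv_const_mul_field, logDeriv_apply, mul_div_assoc]

theorem pdx_div_of_ridge (hm : m ≠ 0) (q : ℝ × ℝ) :
    pdx (fun q => K (m ^ 2 * q.1 + q.2)) q / (m * K (m ^ 2 * q.1 + q.2)) =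
      m * logDeriv K (m ^ 2 * q.1 + q.2) := by
  rw [pdx_comp_linear_s8 K, logDeriv_apply, sq, mul_assoc, mul_div_mul_left _ _ hm, mul_div_assoc]

theorem E2_of_ridge (hm : m ≠ 0) :
    E2 (fun q => m * K (m ^ 2 * q.1 + q.2)) (fun q => K (m ^ 2 * q.1 + q.2)) p := by
  rw [E2, pdy_div_of_ridge, pdx_div_of_ridge hm]

theorem E3_of_ridge (hm : m ≠ 0)
    (hK : (1 + m ^ 2) * deriv (logDeriv K) (m ^ 2 * p.1 + p.2) = K (m ^ 2 * p.1 + p.2) ^ 2) :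
    E3 (-1) (fun q => m * K (m ^ 2 * q.1 + q.2)) (fun q => K (m ^ 2 * q.1 + q.2)) p := by
  rw [E3]
  simp only [pdy_div_of_ridge, pdx_div_of_ridge hm]
  rw [pdy_comp_linear_s8 (fun s => m * logDeriv K s), pdx_comp_linear_s8 (fun s => m * logDeriv K s),
    deriv_const_mul_field]
  linear_combination m * hK

end Ridge

theorem deriv_logDeriv_csch_profile {c m s : ℝ} (hc : c ≠ 0) (hs : s ≠ 0) :
    (1 + m ^ 2) * deriv (logDeriv fun t => c * (1 / sinh (c * t / √(1 + m ^ 2)))) s =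
      (c * (1 / sinh (c * s / √(1 + m ^ 2)))) ^ 2 := by
  have hS : 0 < √(1 + m ^ 2) := sqrt_pos.mpr (by positivity)
  have hS2 : √(1 + m ^ 2) ^ 2 = 1 + m ^ 2 := sq_sqrt (by positivity)
  simp only [← div_mul_eq_mul_div c]
  rw [deriv_logDeriv_const_mul_one_div_sinh hc (mul_ne_zero (div_ne_zero hc hS.ne') hs)]
  field_simp
  rw [hS2]

/-- For `c, m > 0`, on the open set where `m²x + y ≠ 0`, the functions
`f = c·m·csch(c(m²x+y)/√(1+m²))` and `k = c·csch(c(m²x+y)/√(1+m²))` satisfy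
(E1), (E2), (E3) with ε = −1.  Here `csch t = 1/sinh t`. -/
theorem stmt_8 (c m : ℝ) (hc : 0 < c) (hm : 0 < m) :
    let f : ℝ × ℝ → ℝ :=
      fun p => c * m * (1 / Real.sinh (c * (m ^ 2 * p.1 + p.2) / Real.sqrt (1 + m ^ 2)))
    let k : ℝ × ℝ → ℝ :=
      fun p => c * (1 / Real.sinh (c * (m ^ 2 * p.1 + p.2) / Real.sqrt (1 + m ^ 2)))
    ∀ p : ℝ × ℝ, m ^ 2 * p.1 + p.2 ≠ 0 →
      E1 f k p ∧ E2 f k p ∧ E3 (-1) f k p := by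
  intro f k p hp
  let K : ℝ → ℝ := fun t => c * (1 / sinh (c * t / √(1 + m ^ 2)))
  have hf : f = fun q => m * K (m ^ 2 * q.1 + q.2) := funext fun q => by simp only [f, K]; ring
  have hsinh : sinh (c * (m ^ 2 * p.1 + p.2) / √(1 + m ^ 2)) ≠ 0 :=
    sinh_ne_zero.mpr (div_ne_zero (mul_ne_zero hc.ne' hp) (sqrt_pos.mpr (by positivity)).ne')
  have hK0 : K (m ^ 2 * p.1 + p.2) ≠ 0 := mul_ne_zero hc.ne' (one_div_ne_zero hsinh)
  have hKc : ContinuousAt K (m ^ 2 * p.1 + p.2) :=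
    continuousAt_const.mul (continuousAt_const.div (by fun_prop) hsinh)
  rw [hf]
  exact ⟨E1_of_ridge hKc hK0, E2_of_ridge hm.ne',
    E3_of_ridge hm.ne' (deriv_logDeriv_csch_profile hc.ne' hp)⟩
end
end

section
/- For all real numbers a ≠ 0, b ∈ ℝ, and m > 0, the functions f(x,y) = a·m·e^{b(m²x+y)} and k(x,y) = a·e^{b(m²x+y)} satisfy all three equations (E1), (E2), (E3) of the system (S_ε) with ε = 0 on ℝ², and the same holds with k replaced by −k. -/
noncomputable section

/-! `f` and `±k` are multiples `C·w`, `D·w` of the same exponential `w = e^{b(μx+y)}`, and the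
partial derivatives of `w` are again multiples of `w`. Hence `k/f`, `f/k`, `(∂_y f)/k` and
`(∂ₓ k)/f` are all constant, so (E1) and (E3) with `ε = 0` hold, and (E2) reduces to
`C b / D = D b μ / C`, which follows from `C² = μ D²` (here `C = a m`, `D = ±a`, `μ = m²`). -/

section ConstantQuotients

variable {f k : ℝ × ℝ → ℝ}

lemma pdx_eq_zero_of_forall_eq {g : ℝ × ℝ → ℝ} {c : ℝ} (h : ∀ q, g q = c) (p : ℝ × ℝ) :
    pdx g p = 0 := by
  simp only [pdx, h, deriv_const]

lemma pdy_eq_zero_of_forall_eq {g : ℝ × ℝ → ℝ} {c : ℝ} (h : ∀ q, g q = c) (p : ℝ × ℝ) :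
    pdy g p = 0 := by
  simp only [pdy, h, deriv_const]

lemma E1_of_forall_div_eq {c : ℝ} (h : ∀ q, k q / f q = c) (p : ℝ × ℝ) : E1 f k p := by
  have h' : ∀ q, f q / k q = c⁻¹ := fun q => by rw [← h q, inv_div]
  rw [E1, pdx_eq_zero_of_forall_eq h, pdy_eq_zero_of_forall_eq h', add_zero]

lemma E3_zero_of_forall_div_eq {c d : ℝ} (hf : ∀ q, pdy f q / k q = c)
    (hk : ∀ q, pdx k q / f q = d) (p : ℝ × ℝ) : E3 0 f k p := by
  rw [E3, pdy_eq_zero_of_forall_eq hf, pdx_eq_zero_of_forall_eq hk]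
  ring

end ConstantQuotients

def expWave (C b μ : ℝ) (p : ℝ × ℝ) : ℝ := C * Real.exp (b * (μ * p.1 + p.2))

section ExpWave

variable (C D b μ : ℝ)

lemma pdx_expWave : pdx (expWave C b μ) = expWave (C * (b * μ)) b μ := by
  ext p
  have h : HasDerivAt (fun t => b * (μ * t + p.2)) (b * μ) p.1 := by
    simpa using (((hasDerivAt_id p.1).const_mul μ).add_const p.2).const_mul b
  change deriv (fun t => C * Real.exp (b * (μ * t + p.2))) p.1 = _
  rw [(h.exp.const_mul C).deriv, expWave]
  ring

lemma pdy_expWave : pdy (expWave C b μ) = expWave (C * b) b μ := by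
  ext p
  have h : HasDerivAt (fun t => b * (μ * p.1 + t)) b p.2 := by
    simpa using ((hasDerivAt_id p.2).const_add (μ * p.1)).const_mul b
  change deriv (fun t => C * Real.exp (b * (μ * p.1 + t))) p.2 = _
  rw [(h.exp.const_mul C).deriv, expWave]
  ring

lemma expWave_div_expWave (p : ℝ × ℝ) : expWave D b μ p / expWave C b μ p = D / C :=
  mul_div_mul_right D C (Real.exp_ne_zero _)

lemma E2_expWave (h : C ^ 2 = μ * D ^ 2) (p : ℝ × ℝ) :
    E2 (expWave C b μ) (expWave D b μ) p := by
  rw [E2, pdy_expWave, pdx_expWave, expWave_div_expWave, expWave_div_expWave]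
  rcases eq_or_ne C 0 with rfl | hC
  · simp -- both sides are `_ / 0 = 0`
  have hD : D ≠ 0 := by
    rintro rfl
    exact hC (pow_eq_zero_iff two_ne_zero |>.mp (by simpa using h))
  field_simp
  linear_combination b * h

theorem expWave_solves (h : C ^ 2 = μ * D ^ 2) (p : ℝ × ℝ) :
    E1 (expWave C b μ) (expWave D b μ) p ∧ E2 (expWave C b μ) (expWave D b μ) p ∧
      E3 0 (expWave C b μ) (expWave D b μ) p := by
  refine ⟨E1_of_forall_div_eq (expWave_div_expWave C D b μ) p, E2_expWave C D b μ h p, ?_⟩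
  refine E3_zero_of_forall_div_eq (c := C * b / D) (d := D * (b * μ) / C)
    (fun q => ?_) (fun q => ?_) p
  · rw [pdy_expWave, expWave_div_expWave]
  · rw [pdx_expWave, expWave_div_expWave]

end ExpWave

theorem stmt_10_general (a b m : ℝ) :
    let f : ℝ × ℝ → ℝ := fun p => a * m * Real.exp (b * (m ^ 2 * p.1 + p.2))
    let k : ℝ × ℝ → ℝ := fun p => a * Real.exp (b * (m ^ 2 * p.1 + p.2))
    (∀ p, E1 f k p ∧ E2 f k p ∧ E3 0 f k p) ∧
      (∀ p, E1 f (fun q => -k q) p ∧ E2 f (fun q => -k q) p ∧ E3 0 f (fun q => -k q) p) := by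
  intro f k
  have hneg : (fun q => -k q) = expWave (-a) b (m ^ 2) := funext fun q => (neg_mul _ _).symm
  rw [hneg]
  exact ⟨expWave_solves (a * m) a b (m ^ 2) (by ring),
    expWave_solves (a * m) (-a) b (m ^ 2) (by ring)⟩

/-- For `a ≠ 0`, `b ∈ ℝ`, `m > 0`, the functions `f = a·m·e^{b(m²x+y)}` and
`k = a·e^{b(m²x+y)}` satisfy (E1), (E2), (E3) with ε = 0 on ℝ², and likewise with `k`
replaced by `−k`. -/
theorem stmt_10 (a b m : ℝ) (ha : a ≠ 0) (hm : 0 < m) :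
    let f : ℝ × ℝ → ℝ := fun p => a * m * Real.exp (b * (m ^ 2 * p.1 + p.2))
    let k : ℝ × ℝ → ℝ := fun p => a * Real.exp (b * (m ^ 2 * p.1 + p.2))
    (∀ p, E1 f k p ∧ E2 f k p ∧ E3 0 f k p) ∧
      (∀ p, E1 f (fun q => -k q) p ∧ E2 f (fun q => -k q) p ∧ E3 0 f (fun q => -k q) p) :=
  stmt_10_general a b m
end
end

section
/- Let f, k : ℝ² → ℝ be positive twice continuously differentiable functions satisfying all three equations (E1), (E2), (E3) of the system (S_ε) with ε = 0 on all of ℝ². Then there exist real numbers a > 0, m > 0 and b ∈ ℝ such that f(x,y) = a·m·e^{b(m²x+y)} and k(x,y) = a·e^{b(m²x+y)} for all (x,y) ∈ ℝ². -/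
noncomputable section

/-! By (E1) the ratio `m = f / k` solves `m_x = m² m_y`, so `m` is constant along the
characteristic line through `p` with direction `(1, -m(p)²)`. If `m(p) ≠ m(q)` for positive
values, the characteristics through `p` and `q` have different slopes and meet, which is
absurd; hence `f = c k`. Then (E2) reads `k_x = c² k_y`, and (E3), for `u = log k`, reads
`u_yy + u_xy = 0`. As `u_xy = c² u_yy`, the partials of `u_y` vanish, so `u` is affine and `k`
is an exponential. -/

open Real

section PartialDerivatives

variable {g h : ℝ × ℝ → ℝ} {p : ℝ × ℝ}

lemma hasDerivAt_pdx (hg : DifferentiableAt ℝ g p) :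
    HasDerivAt (fun t => g (t, p.2)) (pdx g p) p.1 :=
  (hg.comp p.1 (differentiableAt_id.prodMk (differentiableAt_const p.2))).hasDerivAt

lemma hasDerivAt_pdy (hg : DifferentiableAt ℝ g p) :
    HasDerivAt (fun t => g (p.1, t)) (pdy g p) p.2 :=
  (hg.comp p.2 ((differentiableAt_const p.1).prodMk differentiableAt_id)).hasDerivAt

lemma pdx_eq_fderiv (hg : DifferentiableAt ℝ g p) : pdx g p = fderiv ℝ g p (1, 0) :=
  (hasDerivAt_pdx hg).unique <|
    hg.hasFDerivAt.comp_hasDerivAt p.1 ((hasDerivAt_id _).prodMk (hasDerivAt_const _ _))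

lemma pdy_eq_fderiv (hg : DifferentiableAt ℝ g p) : pdy g p = fderiv ℝ g p (0, 1) :=
  (hasDerivAt_pdy hg).unique <|
    hg.hasFDerivAt.comp_hasDerivAt p.2 ((hasDerivAt_const _ _).prodMk (hasDerivAt_id _))

lemma fderiv_apply_eq_pdx_pdy (hg : DifferentiableAt ℝ g p) (v : ℝ × ℝ) :
    fderiv ℝ g p v = v.1 * pdx g p + v.2 * pdy g p := by
  have hv : v = v.1 • ((1 : ℝ), (0 : ℝ)) + v.2 • ((0 : ℝ), (1 : ℝ)) := by simp
  rw [pdx_eq_fderiv hg, pdy_eq_fderiv hg]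
  conv_lhs => rw [hv, map_add, map_smul, map_smul]
  rfl

lemma pdx_const_mul (c : ℝ) : pdx (fun q => c * g q) p = c * pdx g p :=
  deriv_const_mul_field c

lemma pdy_const_mul (c : ℝ) : pdy (fun q => c * g q) p = c * pdy g p :=
  deriv_const_mul_field c

lemma pdx_div (hg : DifferentiableAt ℝ g p) (hh : DifferentiableAt ℝ h p) (hp : h p ≠ 0) :
    pdx (fun q => g q / h q) p = (pdx g p * h p - g p * pdx h p) / h p ^ 2 :=
  ((hasDerivAt_pdx hg).div (hasDerivAt_pdx hh) hp).deriv

lemma pdy_div (hg : DifferentiableAt ℝ g p) (hh : DifferentiableAt ℝ h p) (hp : h p ≠ 0) :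
    pdy (fun q => g q / h q) p = (pdy g p * h p - g p * pdy h p) / h p ^ 2 :=
  ((hasDerivAt_pdy hg).div (hasDerivAt_pdy hh) hp).deriv

lemma pdx_log (hg : DifferentiableAt ℝ g p) (hp : g p ≠ 0) :
    pdx (fun q => log (g q)) p = pdx g p / g p :=
  ((hasDerivAt_pdx hg).log hp).deriv

lemma pdy_log (hg : DifferentiableAt ℝ g p) (hp : g p ≠ 0) :
    pdy (fun q => log (g q)) p = pdy g p / g p :=
  ((hasDerivAt_pdy hg).log hp).deriv

lemma contDiff_pdy {n : WithTop ℕ∞} (hg : ContDiff ℝ (n + 1) g) : ContDiff ℝ n (pdy g) := by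
  have hpdy : pdy g = fun q => fderiv ℝ g q (0, 1) :=
    funext fun q => pdy_eq_fderiv ((hg.differentiable (by simp)) q)
  rw [hpdy]
  exact (ContinuousLinearMap.apply ℝ ℝ ((0 : ℝ), (1 : ℝ))).contDiff.comp (hg.fderiv_right le_rfl)

lemma pdx_pdy_comm (hg : ContDiff ℝ 2 g) (p : ℝ × ℝ) : pdx (pdy g) p = pdy (pdx g) p := by
  have hdg : Differentiable ℝ g := hg.differentiable two_ne_zero
  have hg' : DifferentiableAt ℝ (fderiv ℝ g) p :=
    (hg.fderiv_right (m := 1) le_rfl).differentiable one_ne_zero p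
  have hdir (v : ℝ × ℝ) : HasFDerivAt (fun q => fderiv ℝ g q v)
      ((ContinuousLinearMap.apply ℝ ℝ v).comp (fderiv ℝ (fderiv ℝ g) p)) p :=
    (ContinuousLinearMap.apply ℝ ℝ v).hasFDerivAt.comp p hg'.hasFDerivAt
  have hpdx : pdx g = fun q => fderiv ℝ g q (1, 0) := funext fun q => pdx_eq_fderiv (hdg q)
  have hpdy : pdy g = fun q => fderiv ℝ g q (0, 1) := funext fun q => pdy_eq_fderiv (hdg q)
  rw [hpdx, hpdy, pdx_eq_fderiv (hdir _).differentiableAt, pdy_eq_fderiv (hdir _).differentiableAt,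
    (hdir _).fderiv, (hdir _).fderiv]
  exact second_derivative_symmetric (fun q => (hdg q).hasFDerivAt) hg'.hasFDerivAt _ _

lemma apply_eq_of_pdx_pdy_const (hg : Differentiable ℝ g) {α β : ℝ} (hx : ∀ q, pdx g q = α)
    (hy : ∀ q, pdy g q = β) (p : ℝ × ℝ) : g p = g 0 + α * p.1 + β * p.2 := by
  let L : ℝ × ℝ →L[ℝ] ℝ := α • ContinuousLinearMap.fst ℝ ℝ ℝ + β • ContinuousLinearMap.snd ℝ ℝ ℝ
  have hL (q : ℝ × ℝ) : HasFDerivAt g L q := by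
    convert (hg q).hasFDerivAt using 1
    ext <;> simp [L, fderiv_apply_eq_pdx_pdy (hg q), hx, hy]
  have hzero (q : ℝ × ℝ) : HasFDerivAt (fun q => g q - L q) (0 : ℝ × ℝ →L[ℝ] ℝ) q :=
    ((hL q).sub L.hasFDerivAt).congr_fderiv (sub_self _)
  have hconst := is_const_of_fderiv_eq_zero (fun q => (hzero q).differentiableAt)
    (fun q => (hzero q).fderiv) p 0
  have hLp : L p = α * p.1 + β * p.2 := by simp [L]
  simp only [map_zero, sub_zero, hLp] at hconst
  linarith

end PartialDerivatives

lemma eq_zero_of_hasDerivAt_mul_self {u B : ℝ → ℝ} (hB : Continuous B)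
    (hu : ∀ t, HasDerivAt u (B t * u t) t) (hu0 : u 0 = 0) (t : ℝ) : u t = 0 := by
  set F : ℝ → ℝ := fun s => ∫ r in (0 : ℝ)..s, B r
  have hF (s : ℝ) : HasDerivAt F (B s) s := (hB.integral_hasStrictDerivAt 0 s).hasDerivAt
  have hw (s : ℝ) : HasDerivAt (fun s => u s * exp (-F s)) 0 s := by
    refine ((hu s).mul (hF s).neg.exp).congr_deriv ?_
    ring
  have hconst := is_const_of_deriv_eq_zero (fun s => (hw s).differentiableAt)
    (fun s => (hw s).deriv) t 0
  simpa [hu0, F, exp_ne_zero] using hconst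

lemma exists_add_smul_eq_add_smul {a b : ℝ} (hab : a ≠ b) (p q : ℝ × ℝ) :
    ∃ s t : ℝ, p + s • ((1 : ℝ), a) = q + t • ((1 : ℝ), b) := by
  refine ⟨(q.2 - p.2 - b * (q.1 - p.1)) / (a - b), (q.2 - p.2 - a * (q.1 - p.1)) / (a - b), ?_⟩
  have : a - b ≠ 0 := sub_ne_zero.mpr hab
  ext <;> simp <;> field_simp <;> ring

section Burgers

variable {m : ℝ × ℝ → ℝ}

lemma apply_add_smul_characteristic (hm : ContDiff ℝ 1 m)
    (hburgers : ∀ q, pdx m q = m q ^ 2 * pdy m q) (p : ℝ × ℝ) (t : ℝ) :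
    m (p + t • ((1 : ℝ), -m p ^ 2)) = m p := by
  set v : ℝ × ℝ := (1, -m p ^ 2)
  have hdm : Differentiable ℝ m := hm.differentiable one_ne_zero
  have hline : Continuous fun s : ℝ => p + s • v := by fun_prop
  have hode (s : ℝ) : HasDerivAt (fun s => m (p + s • v) - m p)
      ((m (p + s • v) + m p) * pdy m (p + s • v) * (m (p + s • v) - m p)) s := by
    refine (((hdm _).hasFDerivAt.comp_hasDerivAt s
      (((hasDerivAt_id s).smul_const v).const_add p)).sub_const (m p)).congr_deriv ?_
    rw [one_smul, fderiv_apply_eq_pdx_pdy (hdm _), hburgers]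
    simp only [id, v]
    ring
  have hB : Continuous fun s => (m (p + s • v) + m p) * pdy m (p + s • v) :=
    ((hm.continuous.comp hline).add continuous_const).mul
      ((contDiff_pdy (n := 0) (by simpa using hm)).continuous.comp hline)
  exact sub_eq_zero.mp (eq_zero_of_hasDerivAt_mul_self hB hode (by simp) t)

lemma apply_eq_of_pdx_eq_sq_mul_pdy (hm : ContDiff ℝ 1 m) (hnonneg : ∀ q, 0 ≤ m q)
    (hburgers : ∀ q, pdx m q = m q ^ 2 * pdy m q) (p q : ℝ × ℝ) : m p = m q := by
  by_contra hne
  have hslope : -m p ^ 2 ≠ -m q ^ 2 := fun h =>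
    hne <| (pow_left_inj₀ (hnonneg p) (hnonneg q) two_ne_zero).mp (neg_inj.mp h)
  obtain ⟨s, t, hst⟩ := exists_add_smul_eq_add_smul hslope p q
  apply hne
  rw [← apply_add_smul_characteristic hm hburgers p s, hst,
    apply_add_smul_characteristic hm hburgers q t]

end Burgers

section System

variable {f k : ℝ × ℝ → ℝ} {c : ℝ} {p : ℝ × ℝ}

lemma pdx_div_eq_sq_mul_pdy_div_of_E1 (hf : DifferentiableAt ℝ f p)
    (hk : DifferentiableAt ℝ k p) (hf0 : f p ≠ 0) (hk0 : k p ≠ 0) (h1 : E1 f k p) :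
    pdx (fun q => f q / k q) p = (f p / k p) ^ 2 * pdy (fun q => f q / k q) p := by
  unfold E1 at h1
  rw [pdx_div hk hf hf0, pdy_div hf hk hk0] at h1
  rw [pdx_div hf hk hk0, pdy_div hf hk hk0]
  field_simp at h1 ⊢
  linear_combination -h1

lemma exists_eq_const_mul_of_E1 (hf : ContDiff ℝ 1 f) (hk : ContDiff ℝ 1 k)
    (hfpos : ∀ q, 0 < f q) (hkpos : ∀ q, 0 < k q) (h1 : ∀ q, E1 f k q) :
    ∃ c > 0, ∀ q, f q = c * k q := by
  have hk0 (q : ℝ × ℝ) : k q ≠ 0 := (hkpos q).ne'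
  have hdf := hf.differentiable one_ne_zero
  have hdk := hk.differentiable one_ne_zero
  have hconst := apply_eq_of_pdx_eq_sq_mul_pdy (hf.div hk hk0)
    (fun q => (div_pos (hfpos q) (hkpos q)).le)
    (fun q => pdx_div_eq_sq_mul_pdy_div_of_E1 (hdf q) (hdk q) (hfpos q).ne' (hk0 q) (h1 q))
  exact ⟨f 0 / k 0, div_pos (hfpos 0) (hkpos 0),
    fun q => (div_eq_iff (hk0 q)).mp (hconst q 0)⟩

lemma pdx_eq_sq_mul_pdy_of_E2 (hc : c ≠ 0) (hk0 : k p ≠ 0)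
    (h2 : E2 (fun q => c * k q) k p) : pdx k p = c ^ 2 * pdy k p := by
  unfold E2 at h2
  rw [pdy_const_mul] at h2
  field_simp at h2
  linear_combination -h2

lemma pdy_pdy_log_add_pdx_pdy_log_of_E3 (hc : c ≠ 0) (hk : Differentiable ℝ k)
    (hk0 : ∀ q, k q ≠ 0) (hkx : ∀ q, pdx k q = c ^ 2 * pdy k q)
    (h3 : E3 0 (fun q => c * k q) k p) :
    pdy (pdy fun q => log (k q)) p + pdx (pdy fun q => log (k q)) p = 0 := by
  have hy : (fun q => pdy (fun q => c * k q) q / k q) = fun q => c * pdy (fun q => log (k q)) q :=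
    funext fun q => by rw [pdy_const_mul, pdy_log (hk q) (hk0 q)]; ring
  have hx : (fun q => pdx k q / (c * k q)) = fun q => c * pdy (fun q => log (k q)) q :=
    funext fun q => by rw [hkx, pdy_log (hk q) (hk0 q)]; field_simp
  unfold E3 at h3
  rw [hy, hx, pdy_const_mul, pdx_const_mul, neg_zero, zero_mul, zero_mul, ← mul_add] at h3
  exact (mul_eq_zero.mp h3).resolve_left hc

lemma exists_eq_mul_exp (hk : ContDiff ℝ 2 k) (hkpos : ∀ q, 0 < k q)
    (hkx : ∀ q, pdx k q = c ^ 2 * pdy k q)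
    (hwave : ∀ q, pdy (pdy fun q => log (k q)) q + pdx (pdy fun q => log (k q)) q = 0) :
    ∃ b, ∀ p, k p = k 0 * exp (b * (c ^ 2 * p.1 + p.2)) := by
  set u : ℝ × ℝ → ℝ := fun q => log (k q)
  have hu : ContDiff ℝ 2 u := hk.log fun q => (hkpos q).ne'
  have hdk := hk.differentiable two_ne_zero
  have hux (q : ℝ × ℝ) : pdx u q = c ^ 2 * pdy u q := by
    rw [pdx_log (hdk q) (hkpos q).ne', pdy_log (hdk q) (hkpos q).ne', hkx]
    ring
  have huxy (q : ℝ × ℝ) : pdx (pdy u) q = c ^ 2 * pdy (pdy u) q := by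
    rw [pdx_pdy_comm hu, show pdx u = fun q => c ^ 2 * pdy u q from funext hux, pdy_const_mul]
  have huyy (q : ℝ × ℝ) : pdy (pdy u) q = 0 := by
    have h := hwave q
    rw [huxy] at h
    nlinarith [sq_nonneg c]
  have hb (q : ℝ × ℝ) : pdy u q = pdy u 0 := by
    simpa using apply_eq_of_pdx_pdy_const (α := 0) (β := 0)
      ((contDiff_pdy (n := 1) hu).differentiable one_ne_zero)
      (fun q => by rw [huxy, huyy, mul_zero]) huyy q
  refine ⟨pdy u 0, fun p => ?_⟩
  have hup := apply_eq_of_pdx_pdy_const (hu.differentiable two_ne_zero)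
    (fun q => by rw [hux, hb]) hb p
  calc k p = exp (u p) := (exp_log (hkpos p)).symm
    _ = exp (u 0) * exp (pdy u 0 * (c ^ 2 * p.1 + p.2)) := by rw [hup, ← exp_add]; ring_nf
    _ = k 0 * exp (pdy u 0 * (c ^ 2 * p.1 + p.2)) := by rw [exp_log (hkpos 0)]

end System

/-- Positive C² solutions `f, k` of the system (E1), (E2), (E3) with ε = 0
defined on all of ℝ² are exactly the exponential family: there exist `a > 0`, `m > 0`,
`b ∈ ℝ` with `f(x,y) = a·m·e^{b(m²x+y)}` and `k(x,y) = a·e^{b(m²x+y)}`. -/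
theorem stmt_12 (f k : ℝ × ℝ → ℝ) (hf : ContDiff ℝ 2 f) (hk : ContDiff ℝ 2 k)
    (hfpos : ∀ p, 0 < f p) (hkpos : ∀ p, 0 < k p)
    (h : ∀ p, E1 f k p ∧ E2 f k p ∧ E3 0 f k p) :
    ∃ a > (0 : ℝ), ∃ m > (0 : ℝ), ∃ b : ℝ, ∀ p : ℝ × ℝ,
      f p = a * m * Real.exp (b * (m ^ 2 * p.1 + p.2)) ∧
        k p = a * Real.exp (b * (m ^ 2 * p.1 + p.2)) := by
  obtain ⟨c, hc, hfk⟩ := exists_eq_const_mul_of_E1 (hf.of_le one_le_two) (hk.of_le one_le_two)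
    hfpos hkpos fun p => (h p).1
  obtain rfl : f = fun q => c * k q := funext hfk
  have hk0 (q : ℝ × ℝ) : k q ≠ 0 := (hkpos q).ne'
  have hkx (q : ℝ × ℝ) : pdx k q = c ^ 2 * pdy k q :=
    pdx_eq_sq_mul_pdy_of_E2 hc.ne' (hk0 q) (h q).2.1
  obtain ⟨b, hb⟩ := exists_eq_mul_exp hk hkpos hkx fun q =>
    pdy_pdy_log_add_pdx_pdy_log_of_E3 hc.ne' (hk.differentiable two_ne_zero) hk0 hkx (h q).2.2
  refine ⟨k 0, hkpos 0, c, hc, b, fun p => ⟨?_, hb p⟩⟩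
  show c * k p = _
  rw [hb p]
  ring
end
end

section
/- Fix real numbers b ∈ ℝ and m > 0 with m ≠ 1, and set α = √(1+4b²m²)/2. Define L : ℝ² → ℂ² by L(x,y) = (e^{i(x+y)/2 + b(m²x+y)}/√(1+m²)) · ( 2m·sin(α(x−y))/√(1+4b²m²) , (1+m²)·cos(α(x−y))/√(1+b²(1+m²)²) − i·(1−m²)·sin(α(x−y))/(√(1+4b²m²)·√(1+b²(1+m²)²)) ). Then L satisfies on ℝ² the PDE system L_xx = (i + bm²)·L_x − bm²·L_y, L_xy = b·L_x + bm²·L_y, and L_yy = −b·L_x + (i + b)·L_y, where subscripts denote partial derivatives. -/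
/-!
Both components of `L` lie in the family `e^{μx+νy}(c₁ cos α(x−y) + c₂ sin α(x−y))` with
`μ = i/2 + bm²` and `ν = i/2 + b`. This family is closed under `∂ₓ` and `∂ᵧ`, which act on the
coefficient vector `(c₁, c₂)` by `c ↦ (μc₁ + αc₂, μc₂ − αc₁)` and `c ↦ (νc₁ − αc₂, νc₂ + αc₁)`.
For each equation of the system, the residual is `±(1/4 + b²m² − α²)` times the function itself,
so every member of the family solves the system once `α² = 1/4 + b²m²`, whatever its coefficients.
-/

noncomputable section

open Complex

/-- Partial derivative in the first variable of a ℂ²-valued map on ℝ². -/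
def pdxC (L : ℝ × ℝ → ℂ × ℂ) (p : ℝ × ℝ) : ℂ × ℂ := deriv (fun t => L (t, p.2)) p.1

/-- Partial derivative in the second variable of a ℂ²-valued map on ℝ². -/
def pdyC (L : ℝ × ℝ → ℂ × ℂ) (p : ℝ × ℝ) : ℂ × ℂ := deriv (fun t => L (p.1, t)) p.2

def expTrig (μ ν α : ℂ) (c : ℂ × ℂ) (q : ℝ × ℝ) : ℂ :=
  exp (μ * q.1 + ν * q.2) * (c.1 * cos (α * (q.1 - q.2)) + c.2 * sin (α * (q.1 - q.2)))

/-- The action of `d/dt` on the coefficients of `e^{μt}(c₁ cos αt + c₂ sin αt)`. -/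
def trigDeriv (μ α : ℂ) (c : ℂ × ℂ) : ℂ × ℂ :=
  (μ * c.1 + α * c.2, μ * c.2 - α * c.1)

theorem expTrig_swap (μ ν α : ℂ) (c : ℂ × ℂ) (x y : ℝ) :
    expTrig μ ν α c (x, y) = expTrig ν μ (-α) c (y, x) := by
  simp only [expTrig, add_comm (μ * x), neg_mul_comm, neg_sub]

theorem hasDerivAt_expTrig_fst (μ ν α : ℂ) (c : ℂ × ℂ) (p : ℝ × ℝ) :
    HasDerivAt (fun t : ℝ => expTrig μ ν α c (t, p.2))
      (expTrig μ ν α (trigDeriv μ α c) p) p.1 := by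
  have hexp : HasDerivAt (fun z : ℂ => exp (μ * z + ν * p.2)) (exp (μ * p.1 + ν * p.2) * μ)
      (p.1 : ℂ) := by
    simpa using (((hasDerivAt_id (p.1 : ℂ)).const_mul μ).add_const (ν * p.2)).cexp
  have harg : HasDerivAt (fun z : ℂ => α * (z - p.2)) α (p.1 : ℂ) := by
    simpa using ((hasDerivAt_id (p.1 : ℂ)).sub_const ((p.2 : ℝ) : ℂ)).const_mul α
  have hcos := (hasDerivAt_cos (α * ((p.1 : ℂ) - p.2))).comp (p.1 : ℂ) harg
  have hsin := (hasDerivAt_sin (α * ((p.1 : ℂ) - p.2))).comp (p.1 : ℂ) harg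
  convert (hexp.mul ((hcos.const_mul c.1).add (hsin.const_mul c.2))).comp_ofReal using 1
  · rfl
  · simp only [expTrig, trigDeriv, Function.comp_apply, Pi.add_apply]
    ring

theorem hasDerivAt_expTrig_snd (μ ν α : ℂ) (c : ℂ × ℂ) (p : ℝ × ℝ) :
    HasDerivAt (fun t : ℝ => expTrig μ ν α c (p.1, t))
      (expTrig μ ν α (trigDeriv ν (-α) c) p) p.2 := by
  obtain ⟨x, y⟩ := p
  have h := hasDerivAt_expTrig_fst ν μ (-α) c (y, x)
  simp only [← expTrig_swap] at h
  exact h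

theorem pdxC_expTrig (μ ν α : ℂ) (c d : ℂ × ℂ) :
    pdxC (fun q => (expTrig μ ν α c q, expTrig μ ν α d q)) =
      fun q => (expTrig μ ν α (trigDeriv μ α c) q, expTrig μ ν α (trigDeriv μ α d) q) :=
  funext fun q => ((hasDerivAt_expTrig_fst μ ν α c q).prodMk
    (hasDerivAt_expTrig_fst μ ν α d q)).deriv

theorem pdyC_expTrig (μ ν α : ℂ) (c d : ℂ × ℂ) :
    pdyC (fun q => (expTrig μ ν α c q, expTrig μ ν α d q)) =
      fun q => (expTrig μ ν α (trigDeriv ν (-α) c) q, expTrig μ ν α (trigDeriv ν (-α) d) q) :=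
  funext fun q => ((hasDerivAt_expTrig_snd μ ν α c q).prodMk
    (hasDerivAt_expTrig_snd μ ν α d q)).deriv

section System

variable {b β α : ℂ} (hα : α ^ 2 = 1 / 4 + b * β) (c : ℂ × ℂ) (q : ℝ × ℝ)
include hα

local notation "μ" => I / 2 + β
local notation "ν" => I / 2 + b

theorem expTrig_trigDeriv_xx :
    expTrig μ ν α (trigDeriv μ α (trigDeriv μ α c)) q =
      (I + β) * expTrig μ ν α (trigDeriv μ α c) q - β * expTrig μ ν α (trigDeriv ν (-α) c) q := by
  linear_combination (norm := skip) (-expTrig μ ν α c q) * (hα + I_sq / 4)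
  simp only [expTrig, trigDeriv]
  ring

theorem expTrig_trigDeriv_xy :
    expTrig μ ν α (trigDeriv μ α (trigDeriv ν (-α) c)) q =
      b * expTrig μ ν α (trigDeriv μ α c) q + β * expTrig μ ν α (trigDeriv ν (-α) c) q := by
  linear_combination (norm := skip) expTrig μ ν α c q * (hα + I_sq / 4)
  simp only [expTrig, trigDeriv]
  ring

theorem expTrig_trigDeriv_yy :
    expTrig μ ν α (trigDeriv ν (-α) (trigDeriv ν (-α) c)) q =
      -b * expTrig μ ν α (trigDeriv μ α c) q + (I + b) * expTrig μ ν α (trigDeriv ν (-α) c) q := by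
  linear_combination (norm := skip) (-expTrig μ ν α c q) * (hα + I_sq / 4)
  simp only [expTrig, trigDeriv]
  ring

end System

theorem stmt_13_general (b m : ℝ) :
    let α : ℝ := Real.sqrt (1 + 4 * b ^ 2 * m ^ 2) / 2
    let L : ℝ × ℝ → ℂ × ℂ := fun p =>
      (Complex.exp (Complex.I * ((p.1 + p.2 : ℝ) : ℂ) / 2 +
            ((b * (m ^ 2 * p.1 + p.2) : ℝ) : ℂ)) /
          ((Real.sqrt (1 + m ^ 2) : ℝ) : ℂ)) •
        ((((2 * m * Real.sin (α * (p.1 - p.2)) / Real.sqrt (1 + 4 * b ^ 2 * m ^ 2) : ℝ) : ℂ)),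
          (((1 + m ^ 2) * Real.cos (α * (p.1 - p.2)) /
              Real.sqrt (1 + b ^ 2 * (1 + m ^ 2) ^ 2) : ℝ) : ℂ) -
            Complex.I * (((1 - m ^ 2) * Real.sin (α * (p.1 - p.2)) /
              (Real.sqrt (1 + 4 * b ^ 2 * m ^ 2) *
                Real.sqrt (1 + b ^ 2 * (1 + m ^ 2) ^ 2)) : ℝ) : ℂ))
    ∀ p : ℝ × ℝ,
      pdxC (fun q => pdxC L q) p =
          (Complex.I + ((b * m ^ 2 : ℝ) : ℂ)) • pdxC L p -
            (((b * m ^ 2 : ℝ) : ℂ)) • pdyC L p ∧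
        pdxC (fun q => pdyC L q) p =
          (((b : ℝ) : ℂ)) • pdxC L p + (((b * m ^ 2 : ℝ) : ℂ)) • pdyC L p ∧
        pdyC (fun q => pdyC L q) p =
          -(((b : ℝ) : ℂ)) • pdxC L p + (Complex.I + ((b : ℝ) : ℂ)) • pdyC L p := by
  intro α L p
  have hα : ((α : ℝ) : ℂ) ^ 2 = 1 / 4 + (b : ℂ) * ((b * m ^ 2 : ℝ) : ℂ) := by
    have hα' : α ^ 2 = 1 / 4 + b * (b * m ^ 2) := by
      simp only [α, div_pow, Real.sq_sqrt (by positivity : (0 : ℝ) ≤ 1 + 4 * b ^ 2 * m ^ 2)]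
      ring
    rw [← ofReal_pow, hα']
    push_cast
    ring
  have hL : L = fun q =>
      (expTrig (I / 2 + ((b * m ^ 2 : ℝ) : ℂ)) (I / 2 + b) α
          (0, ((2 * m / (√(1 + m ^ 2) * √(1 + 4 * b ^ 2 * m ^ 2)) : ℝ) : ℂ)) q,
        expTrig (I / 2 + ((b * m ^ 2 : ℝ) : ℂ)) (I / 2 + b) α
          ((((1 + m ^ 2) / (√(1 + m ^ 2) * √(1 + b ^ 2 * (1 + m ^ 2) ^ 2)) : ℝ) : ℂ),
            -I * (((1 - m ^ 2) / (√(1 + m ^ 2) * (√(1 + 4 * b ^ 2 * m ^ 2) *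
              √(1 + b ^ 2 * (1 + m ^ 2) ^ 2))) : ℝ) : ℂ)) q) := by
    funext q
    have hexp : I * ((q.1 + q.2 : ℝ) : ℂ) / 2 + ((b * (m ^ 2 * q.1 + q.2) : ℝ) : ℂ) =
        (I / 2 + ((b * m ^ 2 : ℝ) : ℂ)) * q.1 + (I / 2 + b) * q.2 := by
      push_cast
      ring
    simp only [L, hexp, expTrig, Prod.smul_mk, smul_eq_mul]
    ext <;> push_cast <;> ring
  rw [hL]
  simp only [pdxC_expTrig, pdyC_expTrig, Prod.smul_mk, Prod.mk_add_mk, Prod.mk_sub_mk,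
    smul_eq_mul]
  exact ⟨Prod.ext (expTrig_trigDeriv_xx hα _ _) (expTrig_trigDeriv_xx hα _ _),
    Prod.ext (expTrig_trigDeriv_xy hα _ _) (expTrig_trigDeriv_xy hα _ _),
    Prod.ext (expTrig_trigDeriv_yy hα _ _) (expTrig_trigDeriv_yy hα _ _)⟩

/-- For `b ∈ ℝ`, `m > 0`, `m ≠ 1` and `α = √(1+4b²m²)/2`, the map
`L(x,y) = (e^{i(x+y)/2 + b(m²x+y)}/√(1+m²))·(2m·sin(α(x−y))/√(1+4b²m²),
(1+m²)cos(α(x−y))/√(1+b²(1+m²)²) − i(1−m²)sin(α(x−y))/(√(1+4b²m²)√(1+b²(1+m²)²)))`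
satisfies `L_xx = (i+bm²)L_x − bm²·L_y`, `L_xy = b·L_x + bm²·L_y`,
`L_yy = −b·L_x + (i+b)·L_y` on ℝ². -/
theorem stmt_13 (b m : ℝ) (hm : 0 < m) (hm1 : m ≠ 1) :
    let α : ℝ := Real.sqrt (1 + 4 * b ^ 2 * m ^ 2) / 2
    let L : ℝ × ℝ → ℂ × ℂ := fun p =>
      (Complex.exp (Complex.I * ((p.1 + p.2 : ℝ) : ℂ) / 2 +
            ((b * (m ^ 2 * p.1 + p.2) : ℝ) : ℂ)) /
          ((Real.sqrt (1 + m ^ 2) : ℝ) : ℂ)) •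
        ((((2 * m * Real.sin (α * (p.1 - p.2)) / Real.sqrt (1 + 4 * b ^ 2 * m ^ 2) : ℝ) : ℂ)),
          (((1 + m ^ 2) * Real.cos (α * (p.1 - p.2)) /
              Real.sqrt (1 + b ^ 2 * (1 + m ^ 2) ^ 2) : ℝ) : ℂ) -
            Complex.I * (((1 - m ^ 2) * Real.sin (α * (p.1 - p.2)) /
              (Real.sqrt (1 + 4 * b ^ 2 * m ^ 2) *
                Real.sqrt (1 + b ^ 2 * (1 + m ^ 2) ^ 2)) : ℝ) : ℂ))
    ∀ p : ℝ × ℝ,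
      pdxC (fun q => pdxC L q) p =
          (Complex.I + ((b * m ^ 2 : ℝ) : ℂ)) • pdxC L p -
            (((b * m ^ 2 : ℝ) : ℂ)) • pdyC L p ∧
        pdxC (fun q => pdyC L q) p =
          (((b : ℝ) : ℂ)) • pdxC L p + (((b * m ^ 2 : ℝ) : ℂ)) • pdyC L p ∧
        pdyC (fun q => pdyC L q) p =
          -(((b : ℝ) : ℂ)) • pdxC L p + (Complex.I + ((b : ℝ) : ℂ)) • pdyC L p :=
  stmt_13_general b m
end
end

section
/- Fix a real number m > 0 with m ≠ 1. Define L : ℝ² → ℂ² by L(x,y) = (e^{i(x+y)/2}/√(1+m²)) · ( 2m·sin((x−y)/2) , (1+m²)·cos((x−y)/2) − i·(1−m²)·sin((x−y)/2) ). Then L satisfies on ℝ² the PDE system L_xx = i·L_x, L_xy = 0, and L_yy = i·L_y, where subscripts denote partial derivatives. -/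
/-!
Writing `sin` and `cos` of `(x - y)/2` through `e^{±i(x-y)/2}` and multiplying by `e^{i(x+y)/2}`
shows `L(x, y) = e^{ix} u + e^{iy} v` for constant vectors `u, v ∈ ℂ²`. Hence `∂ₓ` acts as
multiplication by `i` on the first summand and kills the second, and symmetrically for `∂_y`.
-/

noncomputable section

open Complex

def expSum (u v : ℂ × ℂ) (p : ℝ × ℝ) : ℂ × ℂ := cexp (I * p.1) • u + cexp (I * p.2) • v

lemma smul_expSum (c : ℂ) (u v : ℂ × ℂ) (p : ℝ × ℝ) :
    c • expSum u v p = expSum (c • u) (c • v) p := by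
  simp only [expSum, smul_add, smul_comm c]

lemma expSum_zero_zero : expSum 0 0 = 0 := by
  ext1 p
  simp [expSum]

lemma hasDerivAt_cexp_I_mul (t : ℝ) :
    HasDerivAt (fun s : ℝ => cexp (I * s)) (I * cexp (I * t)) t := by
  have h := ((hasDerivAt_id (t : ℂ)).const_mul I).cexp.comp_ofReal
  simpa [mul_comm] using h

lemma pdxC_expSum (u v : ℂ × ℂ) : pdxC (expSum u v) = expSum (I • u) 0 := by
  ext1 p
  have h := ((hasDerivAt_cexp_I_mul p.1).smul_const u).add_const (cexp (I * p.2) • v)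
  simp only [pdxC, expSum, h.deriv, smul_zero, add_zero, mul_smul, smul_comm I]

lemma pdyC_expSum (u v : ℂ × ℂ) : pdyC (expSum u v) = expSum 0 (I • v) := by
  ext1 p
  have h := ((hasDerivAt_cexp_I_mul p.2).smul_const v).const_add (cexp (I * p.1) • u)
  simp only [pdyC, expSum, h.deriv, smul_zero, zero_add, mul_smul, smul_comm I]

lemma exp_smul_sin_cos_eq_expSum (m x y : ℝ) :
    cexp (I * ((x + y : ℝ) : ℂ) / 2) •
        ((((2 * m * Real.sin ((x - y) / 2) : ℝ) : ℂ)),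
          (((1 + m ^ 2) * Real.cos ((x - y) / 2) : ℝ) : ℂ) -
            I * (((1 - m ^ 2) * Real.sin ((x - y) / 2) : ℝ) : ℂ)) =
      expSum (-(m * I), (m : ℂ) ^ 2) (m * I, 1) (x, y) := by
  have hx : cexp (I * ((x + y : ℝ) : ℂ) / 2) * cexp (((x - y) / 2 : ℝ) * I) = cexp (I * x) := by
    rw [← Complex.exp_add]; congr 1; push_cast; ring
  have hy : cexp (I * ((x + y : ℝ) : ℂ) / 2) * cexp (-(((x - y) / 2 : ℝ) : ℂ) * I) =
      cexp (I * y) := by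
    rw [← Complex.exp_add]; congr 1; push_cast; ring
  simp only [expSum, ← hx, ← hy, Complex.ofReal_mul, Complex.ofReal_sin, Complex.ofReal_cos,
    Complex.sin, Complex.cos, Prod.smul_mk, smul_eq_mul, Prod.mk_add_mk, Prod.mk.injEq]
  push_cast
  constructor
  · field_simp
    ring
  · ring_nf
    simp only [I_sq]
    ring

theorem stmt_14_general (m : ℝ) :
    let L : ℝ × ℝ → ℂ × ℂ := fun p =>
      (Complex.exp (Complex.I * ((p.1 + p.2 : ℝ) : ℂ) / 2) /
          ((Real.sqrt (1 + m ^ 2) : ℝ) : ℂ)) •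
        ((((2 * m * Real.sin ((p.1 - p.2) / 2) : ℝ) : ℂ)),
          (((1 + m ^ 2) * Real.cos ((p.1 - p.2) / 2) : ℝ) : ℂ) -
            Complex.I * (((1 - m ^ 2) * Real.sin ((p.1 - p.2) / 2) : ℝ) : ℂ))
    ∀ p : ℝ × ℝ,
      pdxC (fun q => pdxC L q) p = Complex.I • pdxC L p ∧
        pdxC (fun q => pdyC L q) p = 0 ∧
        pdyC (fun q => pdyC L q) p = Complex.I • pdyC L p := by
  intro L p
  set c : ℂ := ((Real.sqrt (1 + m ^ 2) : ℝ) : ℂ)⁻¹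
  have hL : L = expSum (c • (-(m * I), (m : ℂ) ^ 2)) (c • (m * I, 1)) := by
    ext1 ⟨x, y⟩
    rw [← smul_expSum, ← exp_smul_sin_cos_eq_expSum, smul_smul, mul_comm, ← div_eq_mul_inv]
  simp only [hL, pdxC_expSum, pdyC_expSum, smul_expSum, smul_zero, expSum_zero_zero,
    Pi.zero_apply, and_self]

/-- For `m > 0`, `m ≠ 1`, the map
`L(x,y) = (e^{i(x+y)/2}/√(1+m²))·(2m·sin((x−y)/2), (1+m²)cos((x−y)/2) − i(1−m²)sin((x−y)/2))`
satisfies `L_xx = i·L_x`, `L_xy = 0`, `L_yy = i·L_y` on ℝ². -/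
theorem stmt_14 (m : ℝ) (hm : 0 < m) (hm1 : m ≠ 1) :
    let L : ℝ × ℝ → ℂ × ℂ := fun p =>
      (Complex.exp (Complex.I * ((p.1 + p.2 : ℝ) : ℂ) / 2) /
          ((Real.sqrt (1 + m ^ 2) : ℝ) : ℂ)) •
        ((((2 * m * Real.sin ((p.1 - p.2) / 2) : ℝ) : ℂ)),
          (((1 + m ^ 2) * Real.cos ((p.1 - p.2) / 2) : ℝ) : ℂ) -
            Complex.I * (((1 - m ^ 2) * Real.sin ((p.1 - p.2) / 2) : ℝ) : ℂ))
    ∀ p : ℝ × ℝ,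
      pdxC (fun q => pdxC L q) p = Complex.I • pdxC L p ∧
        pdxC (fun q => pdyC L q) p = 0 ∧
        pdyC (fun q => pdyC L q) p = Complex.I • pdyC L p :=
  stmt_14_general m
end
end

section
/- Fix a real number m > 0 and set u(x,y) = (m²x+y)/√(1+m²) and θ(x,y) = √(1+5m²)·(x−y)/(2·√(1+m²)). Define L̂ : ℝ² → ℂ³ by L̂(x,y) = ( (2m/√(1+5m²))·e^{i(x+y)/2}·sech(u)·sin(θ) , (e^{i(x+y)/2}·sech(u)/√(2+m²))·( √(1+m²)·cos(θ) − i·(1−m²)·sin(θ)/√(1+5m²) ) , (1/√(2+m²))·( 1 − i·√(1+m²)·tanh(u) ) ). Then |L̂(x,y)| = 1 for every (x,y) ∈ ℝ², i.e. L̂ takes values in the unit sphere S⁵ ⊂ ℂ³. -/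
/-!
Both `e^{i(x+y)/2}` factors have modulus one, so `|L̂|²` is a real expression in
`sech u`, `tanh u`, `sin θ`, `cos θ`. The identity
`4m²(2+m²) + (1-m²)² = (1+m²)(1+5m²)` collapses the `sech² u`-part of the first two
components to `(1+m²) sech² u / (2+m²)`, and then `sech² + tanh² = 1` leaves
`(1 + (1+m²)) / (2+m²) = 1`.
-/

open Complex

theorem Real.one_div_cosh_sq_add_tanh_sq (x : ℝ) :
    (1 / Real.cosh x) ^ 2 + Real.tanh x ^ 2 = 1 := by
  have hcosh : Real.cosh x ≠ 0 := (Real.cosh_pos x).ne'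
  rw [Real.tanh_eq_sinh_div_cosh]
  field_simp
  linarith [Real.cosh_sq x]

theorem Complex.norm_exp_I_mul_ofReal_div_two (t : ℝ) : ‖exp (I * t / 2)‖ = 1 := by
  rw [show I * (t : ℂ) / 2 = ((t / 2 : ℝ) : ℂ) * I by push_cast; ring]
  exact norm_exp_ofReal_mul_I _

theorem Complex.sq_norm_ofReal_sub_I_mul_ofReal (a b : ℝ) :
    ‖(a : ℂ) - I * b‖ ^ 2 = a ^ 2 + b ^ 2 := by
  rw [Complex.sq_norm, show (a : ℂ) - I * b = a + ((-b : ℝ) : ℂ) * I by push_cast; ring,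
    normSq_add_mul_I, neg_sq]

theorem twisted_lift_sq_norm_sum (m σ τ s c : ℝ) (hστ : σ ^ 2 + τ ^ 2 = 1)
    (hsc : s ^ 2 + c ^ 2 = 1) :
    (2 * m / √(1 + 5 * m ^ 2)) ^ 2 * σ ^ 2 * s ^ 2
      + σ ^ 2 / √(2 + m ^ 2) ^ 2 * ((√(1 + m ^ 2) * c) ^ 2
          + ((1 - m ^ 2) * s / √(1 + 5 * m ^ 2)) ^ 2)
      + (1 / √(2 + m ^ 2)) ^ 2 * (1 + (√(1 + m ^ 2) * τ) ^ 2) = 1 := by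
  have ha : √(1 + m ^ 2) ^ 2 = 1 + m ^ 2 := Real.sq_sqrt (by positivity)
  have hb : √(1 + 5 * m ^ 2) ^ 2 = 1 + 5 * m ^ 2 := Real.sq_sqrt (by positivity)
  have hc : √(2 + m ^ 2) ^ 2 = 2 + m ^ 2 := Real.sq_sqrt (by positivity)
  have hb0 : 1 + 5 * m ^ 2 ≠ 0 := by positivity
  have hc0 : 2 + m ^ 2 ≠ 0 := by positivity
  simp only [div_pow, mul_pow, ha, hb, hc]
  field_simp
  linear_combination (1 + m ^ 2) * (1 + 5 * m ^ 2) * (σ ^ 2 * hsc + hστ)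

theorem stmt_15_general (m : ℝ) :
    let u : ℝ × ℝ → ℝ := fun p => (m ^ 2 * p.1 + p.2) / Real.sqrt (1 + m ^ 2)
    let θ : ℝ × ℝ → ℝ := fun p =>
      Real.sqrt (1 + 5 * m ^ 2) * (p.1 - p.2) / (2 * Real.sqrt (1 + m ^ 2))
    let L1 : ℝ × ℝ → ℂ := fun p =>
      (((2 * m / Real.sqrt (1 + 5 * m ^ 2) : ℝ)) : ℂ) *
        Complex.exp (Complex.I * ((p.1 + p.2 : ℝ) : ℂ) / 2) *
        (((1 / Real.cosh (u p) : ℝ)) : ℂ) * ((Real.sin (θ p) : ℝ) : ℂ)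
    let L2 : ℝ × ℝ → ℂ := fun p =>
      (Complex.exp (Complex.I * ((p.1 + p.2 : ℝ) : ℂ) / 2) *
          (((1 / Real.cosh (u p) : ℝ)) : ℂ) / ((Real.sqrt (2 + m ^ 2) : ℝ) : ℂ)) *
        (((Real.sqrt (1 + m ^ 2) * Real.cos (θ p) : ℝ) : ℂ) -
          Complex.I *
            (((1 - m ^ 2) * Real.sin (θ p) / Real.sqrt (1 + 5 * m ^ 2) : ℝ) : ℂ))
    let L3 : ℝ × ℝ → ℂ := fun p =>
      ((((1 : ℝ) / Real.sqrt (2 + m ^ 2) : ℝ)) : ℂ) *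
        (1 - Complex.I * ((Real.sqrt (1 + m ^ 2) * Real.tanh (u p) : ℝ) : ℂ))
    ∀ p : ℝ × ℝ,
      ‖L1 p‖ ^ 2 + ‖L2 p‖ ^ 2 + ‖L3 p‖ ^ 2 = 1 := by
  intro u θ L1 L2 L3 p
  have hexp := norm_exp_I_mul_ofReal_div_two (p.1 + p.2)
  have hL3 := sq_norm_ofReal_sub_I_mul_ofReal 1 (√(1 + m ^ 2) * Real.tanh (u p))
  rw [ofReal_one] at hL3
  simp only [L1, L2, L3, norm_mul, norm_div, hexp, norm_real, Real.norm_eq_abs, mul_pow,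
    div_pow, sq_abs, sq_norm_ofReal_sub_I_mul_ofReal, hL3]
  linear_combination twisted_lift_sq_norm_sum m _ _ _ _ (Real.one_div_cosh_sq_add_tanh_sq (u p))
    (Real.sin_sq_add_cos_sq (θ p))

/-- For `m > 0`, with `u = (m²x+y)/√(1+m²)` and
`θ = √(1+5m²)(x−y)/(2√(1+m²))`, the map
`L̂ = ( (2m/√(1+5m²))e^{i(x+y)/2}·sech u·sin θ,
(e^{i(x+y)/2}·sech u/√(2+m²))(√(1+m²)cos θ − i(1−m²)sin θ/√(1+5m²)),
(1/√(2+m²))(1 − i√(1+m²)·tanh u) )`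
takes values in the unit sphere S⁵ ⊂ ℂ³. -/
theorem stmt_15 (m : ℝ) (hm : 0 < m) :
    let u : ℝ × ℝ → ℝ := fun p => (m ^ 2 * p.1 + p.2) / Real.sqrt (1 + m ^ 2)
    let θ : ℝ × ℝ → ℝ := fun p =>
      Real.sqrt (1 + 5 * m ^ 2) * (p.1 - p.2) / (2 * Real.sqrt (1 + m ^ 2))
    let L1 : ℝ × ℝ → ℂ := fun p =>
      (((2 * m / Real.sqrt (1 + 5 * m ^ 2) : ℝ)) : ℂ) *
        Complex.exp (Complex.I * ((p.1 + p.2 : ℝ) : ℂ) / 2) *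
        (((1 / Real.cosh (u p) : ℝ)) : ℂ) * ((Real.sin (θ p) : ℝ) : ℂ)
    let L2 : ℝ × ℝ → ℂ := fun p =>
      (Complex.exp (Complex.I * ((p.1 + p.2 : ℝ) : ℂ) / 2) *
          (((1 / Real.cosh (u p) : ℝ)) : ℂ) / ((Real.sqrt (2 + m ^ 2) : ℝ) : ℂ)) *
        (((Real.sqrt (1 + m ^ 2) * Real.cos (θ p) : ℝ) : ℂ) -
          Complex.I *
            (((1 - m ^ 2) * Real.sin (θ p) / Real.sqrt (1 + 5 * m ^ 2) : ℝ) : ℂ))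
    let L3 : ℝ × ℝ → ℂ := fun p =>
      ((((1 : ℝ) / Real.sqrt (2 + m ^ 2) : ℝ)) : ℂ) *
        (1 - Complex.I * ((Real.sqrt (1 + m ^ 2) * Real.tanh (u p) : ℝ) : ℂ))
    ∀ p : ℝ × ℝ,
      ‖L1 p‖ ^ 2 + ‖L2 p‖ ^ 2 + ‖L3 p‖ ^ 2 = 1 :=
  stmt_15_general m
end

section
/- Fix a real number m > 0 with m ≠ 1. Define L̂ on the open set {(x,y) ∈ ℝ² : m²x + y ≠ 0} by L̂(x,y) = ( 1 − i·(1+m²)/(m²x+y) , m·√(1+m²)·e^{ix}/(m²x+y) , √(1+m²)·e^{iy}/(m²x+y) ) ∈ ℂ³. Then −|L̂₁(x,y)|² + |L̂₂(x,y)|² + |L̂₃(x,y)|² = −1 at every point, i.e. L̂ takes values in the anti-de Sitter space H⁵₁(−1) = {z ∈ ℂ³ : −|z₁|² + |z₂|² + |z₃|² = −1}. -/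
open Complex

theorem Complex.sq_norm_one_sub_I_mul_ofReal (a : ℝ) : ‖1 - I * (a : ℂ)‖ ^ 2 = 1 + a ^ 2 := by
  simp only [Complex.sq_norm, normSq_apply, sub_re, sub_im, one_re, one_im, mul_re, mul_im, I_re,
    I_im, ofReal_re, ofReal_im]
  ring

theorem Complex.sq_norm_ofReal_mul_exp_I_mul_ofReal (r t : ℝ) :
    ‖(r : ℂ) * exp (I * (t : ℂ))‖ ^ 2 = r ^ 2 := by
  rw [mul_comm I, norm_mul, norm_exp_ofReal_mul_I, mul_one, norm_real, Real.norm_eq_abs, sq_abs]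

theorem stmt_18_general (m : ℝ) :
    let L1 : ℝ × ℝ → ℂ := fun p =>
      1 - Complex.I * (((1 + m ^ 2) / (m ^ 2 * p.1 + p.2) : ℝ) : ℂ)
    let L2 : ℝ × ℝ → ℂ := fun p =>
      ((m * Real.sqrt (1 + m ^ 2) / (m ^ 2 * p.1 + p.2) : ℝ) : ℂ) *
        Complex.exp (Complex.I * ((p.1 : ℝ) : ℂ))
    let L3 : ℝ × ℝ → ℂ := fun p =>
      ((Real.sqrt (1 + m ^ 2) / (m ^ 2 * p.1 + p.2) : ℝ) : ℂ) *
        Complex.exp (Complex.I * ((p.2 : ℝ) : ℂ))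
    ∀ p : ℝ × ℝ, m ^ 2 * p.1 + p.2 ≠ 0 →
      -‖L1 p‖ ^ 2 + ‖L2 p‖ ^ 2 + ‖L3 p‖ ^ 2 = -1 := by
  intro L1 L2 L3 p _
  have hsqrt : Real.sqrt (1 + m ^ 2) ^ 2 = 1 + m ^ 2 := Real.sq_sqrt (by positivity)
  simp only [L1, L2, L3, sq_norm_one_sub_I_mul_ofReal, sq_norm_ofReal_mul_exp_I_mul_ofReal,
    div_pow, mul_pow, hsqrt]
  ring

/-- For `m > 0`, `m ≠ 1`, on `{(x,y) : m²x + y ≠ 0}`, the map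
`L̂ = ( 1 − i(1+m²)/(m²x+y), m√(1+m²)·e^{ix}/(m²x+y), √(1+m²)·e^{iy}/(m²x+y) )`
takes values in `H⁵₁(−1) = {z ∈ ℂ³ : −|z₁|² + |z₂|² + |z₃|² = −1}`. -/
theorem stmt_18 (m : ℝ) (hm : 0 < m) (hm1 : m ≠ 1) :
    let L1 : ℝ × ℝ → ℂ := fun p =>
      1 - Complex.I * (((1 + m ^ 2) / (m ^ 2 * p.1 + p.2) : ℝ) : ℂ)
    let L2 : ℝ × ℝ → ℂ := fun p =>
      ((m * Real.sqrt (1 + m ^ 2) / (m ^ 2 * p.1 + p.2) : ℝ) : ℂ) *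
        Complex.exp (Complex.I * ((p.1 : ℝ) : ℂ))
    let L3 : ℝ × ℝ → ℂ := fun p =>
      ((Real.sqrt (1 + m ^ 2) / (m ^ 2 * p.1 + p.2) : ℝ) : ℂ) *
        Complex.exp (Complex.I * ((p.2 : ℝ) : ℂ))
    ∀ p : ℝ × ℝ, m ^ 2 * p.1 + p.2 ≠ 0 →
      -‖L1 p‖ ^ 2 + ‖L2 p‖ ^ 2 + ‖L3 p‖ ^ 2 = -1 :=
  stmt_18_general m
end
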